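/- arXiv:1502.02945 — 6 statements merged into one kernel-verified Lean document; each statement's English description precedes it below -/
import Mathlib

section
/- Let γ > 0, λ > 0, M ≥ 0 with 2λ/γ < 1. Suppose G : ℝ → ℝ is a continuous nonnegative bounded function satisfying, for all t ∈ ℝ, G(t) ≤ 2M + λ(∫_{-∞}^{t} e^{-γ(t-s)} G(s) ds + ∫_{-∞}^{-t} e^{-γ(-s-t)} G(s) ds). Then G(t) ≤ 2M / (1 - 2λ/γ) for all t ∈ ℝ. -/
open MeasureTheory

lemma kernel_integrableOn (γ t : ℝ) (hγ : 0 < γ) :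
    IntegrableOn (fun s => Real.exp (-γ * (t - s))) (Set.Iic t) := by
  have h1 : IntegrableOn (fun x : ℝ => Real.exp (-γ * (t + x))) (Set.Ici (-t)) := by
    rw [integrableOn_Ici_iff_integrableOn_Ioi]
    have h : IntegrableOn (fun x : ℝ => Real.exp (-γ * t) * Real.exp (-γ * x))
        (Set.Ioi (-t)) := (exp_neg_integrableOn_Ioi (-t) hγ).const_mul _
    refine h.congr_fun (fun x _ => ?_) measurableSet_Ioi
    dsimp only; rw [← Real.exp_add]; ring_nf
  have h2 : Integrable ((Set.Ici (-t)).indicator fun x : ℝ => Real.exp (-γ * (t + x))) :=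
    (integrable_indicator_iff measurableSet_Ici).mpr h1
  have h3 := h2.comp_neg
  have h4 : (((Set.Ici (-t)).indicator fun x : ℝ => Real.exp (-γ * (t + x))) ∘ Neg.neg)
      = (Set.Iic t).indicator (fun s => Real.exp (-γ * (t - s))) := by
    ext x
    by_cases hx : x ≤ t
    · have hx' : -t ≤ -x := neg_le_neg hx
      simp only [Function.comp_apply, Set.indicator_of_mem (by exact hx' : -x ∈ Set.Ici (-t)),
        Set.indicator_of_mem (by exact hx : x ∈ Set.Iic t)]
      ring_nf
    · have hx' : ¬ (-t ≤ -x) := fun h => hx (by linarith)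
      simp [Set.indicator, hx, hx', Function.comp]
  have h5 : Integrable ((Set.Iic t).indicator fun s => Real.exp (-γ * (t - s))) := by
    rw [← h4]; exact h3
  exact (integrable_indicator_iff measurableSet_Iic).mp h5

lemma kernel_integral (γ t : ℝ) (hγ : 0 < γ) :
    ∫ s in Set.Iic t, Real.exp (-γ * (t - s)) = 1 / γ := by
  have h0 : (∫ s in Set.Iic t, Real.exp (-γ * (t - s)))
      = ∫ x in Set.Ioi (-t), Real.exp (-γ * t - γ * x) := by
    rw [← integral_comp_neg_Iic t (fun x => Real.exp (-γ * t - γ * x))]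
    congr 1; ext x; ring_nf
  have h1 : (∫ x in Set.Ioi (-t), Real.exp (-γ * t - γ * x))
      = γ⁻¹ • ∫ y in Set.Ioi (γ * (-t)), Real.exp (-γ * t - y) := by
    rw [← integral_comp_mul_left_Ioi (fun y => Real.exp (-γ * t - y)) (-t) hγ]
  have h2 : (∫ y in Set.Ioi (γ * (-t)), Real.exp (-γ * t - y))
      = Real.exp (-γ * t) * ∫ y in Set.Ioi (-(γ * t)), Real.exp (-y) := by
    rw [← integral_const_mul]
    congr 1
    · ring_nf
    · ext y; rw [← Real.exp_add]; ring_nf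
  rw [h0, h1, h2, integral_exp_neg_Ioi, ← Real.exp_add]
  simp [smul_eq_mul]

/-- Symmetrized coupled Gronwall inequality: if `G ≥ 0` is continuous and bounded with
`G t ≤ 2M + λ(∫_{-∞}^t e^{-γ(t-s)}G(s)ds + ∫_{-∞}^{-t} e^{-γ(-s-t)}G(s)ds)` and `2λ/γ < 1`,
then `G t ≤ 2M/(1 - 2λ/γ)`. -/
theorem symmetrized_gronwall_bound
    (γ l M : ℝ) (hγ : 0 < γ) (hl : 0 < l) (hM : 0 ≤ M) (hql : 2 * l / γ < 1)
    (G : ℝ → ℝ) (hGc : Continuous G) (hG0 : ∀ t, 0 ≤ G t) (hGb : ∃ B, ∀ t, G t ≤ B)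
    (hint₁ : ∀ t : ℝ, IntegrableOn (fun s => Real.exp (-γ * (t - s)) * G s) (Set.Iic t))
    (hint₂ : ∀ t : ℝ, IntegrableOn (fun s => Real.exp (-γ * (-s - t)) * G s) (Set.Iic (-t)))
    (hineq : ∀ t : ℝ, G t ≤ 2 * M + l * ((∫ s in Set.Iic t, Real.exp (-γ * (t - s)) * G s) +
      ∫ s in Set.Iic (-t), Real.exp (-γ * (-s - t)) * G s)) :
    ∀ t : ℝ, G t ≤ 2 * M / (1 - 2 * l / γ) := by
  obtain ⟨B, hB⟩ := hGb
  have hbdd : BddAbove (Set.range G) := ⟨B, by rintro _ ⟨t, rfl⟩; exact hB t⟩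
  set S : ℝ := ⨆ t, G t with hSdef
  have hGS : ∀ t, G t ≤ S := fun t => le_ciSup hbdd t
  have hS0 : 0 ≤ S := (hG0 0).trans (hGS 0)
  -- bound each integral by S / γ
  have key : ∀ t : ℝ, (∫ s in Set.Iic t, Real.exp (-γ * (t - s)) * G s) ≤ S / γ := by
    intro t
    have hmono : (∫ s in Set.Iic t, Real.exp (-γ * (t - s)) * G s)
        ≤ ∫ s in Set.Iic t, Real.exp (-γ * (t - s)) * S := by
      refine setIntegral_mono_on (hint₁ t) ((kernel_integrableOn γ t hγ).mul_const S)
        measurableSet_Iic (fun s _ => ?_)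
      exact mul_le_mul_of_nonneg_left (hGS s) (Real.exp_pos _).le
    have heq : (∫ s in Set.Iic t, Real.exp (-γ * (t - s)) * S) = S / γ := by
      rw [integral_mul_const, kernel_integral γ t hγ]
      field_simp
    linarith
  have key₂ : ∀ t : ℝ, (∫ s in Set.Iic (-t), Real.exp (-γ * (-s - t)) * G s) ≤ S / γ := by
    intro t
    have hfun : (fun s => Real.exp (-γ * (-s - t)) * G s)
        = fun s => Real.exp (-γ * (-t - s)) * G s := by
      ext s; ring_nf
    rw [hfun]
    have := key (-t)
    simpa using this
  have hSle : S ≤ 2 * M + 2 * l / γ * S := by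
    refine ciSup_le fun t => (hineq t).trans ?_
    have h1 := key t
    have h2 := key₂ t
    have : (∫ s in Set.Iic t, Real.exp (-γ * (t - s)) * G s) +
        ∫ s in Set.Iic (-t), Real.exp (-γ * (-s - t)) * G s ≤ 2 * (S / γ) := by linarith
    have h3 : l * ((∫ s in Set.Iic t, Real.exp (-γ * (t - s)) * G s) +
        ∫ s in Set.Iic (-t), Real.exp (-γ * (-s - t)) * G s) ≤ l * (2 * (S / γ)) :=
      mul_le_mul_of_nonneg_left this hl.le
    have h4 : l * (2 * (S / γ)) = 2 * l / γ * S := by field_simp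
    linarith
  have hpos : 0 < 1 - 2 * l / γ := by linarith
  have hSbound : S ≤ 2 * M / (1 - 2 * l / γ) := by
    rw [le_div_iff₀ hpos]
    nlinarith
  exact fun t => (hGS t).trans hSbound
end

section
/- Let μ > 0 and let g : ℝ → ℝ be a measurable bounded nonnegative function. Suppose y : ℝ → ℝ is nonnegative and satisfies y(t) ≤ ∫_{-∞}^{t} e^{-2μ(t-s)}(2L y(s) + g(s)) ds for all t, where y is bounded and 0 < L < μ. Then y(t) ≤ ∫_{-∞}^{t} e^{-2(μ - L)(t-s)} g(s) ds for all t ∈ ℝ. -/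
open MeasureTheory Set Real

lemma indicator_scale_eq (c t : ℝ) (hc : 0 < c) :
    (fun x => (Set.Iic (c * t)).indicator Real.exp (c * x))
      = (Set.Iic t).indicator (fun s => Real.exp (c * s)) := by
  ext x
  by_cases hx : x ≤ t
  · simp [Set.indicator_of_mem, hx, (mul_le_mul_iff_right₀ hc).2 hx]
  · push_neg at hx
    simp [Set.indicator_of_notMem, hx.not_ge, ((mul_lt_mul_iff_right₀ hc).2 hx).not_ge]

lemma expIic_int {c : ℝ} (hc : 0 < c) (t : ℝ) :
    IntegrableOn (fun s => Real.exp (c * s)) (Set.Iic t) := by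
  have h1 : Integrable ((Set.Iic (c * t)).indicator Real.exp) := by
    rw [integrable_indicator_iff measurableSet_Iic]
    exact integrableOn_exp_Iic (c * t)
  have h2 := (integrable_comp_mul_left_iff ((Set.Iic (c * t)).indicator Real.exp) hc.ne').mpr h1
  rw [← integrable_indicator_iff measurableSet_Iic]
  rw [← indicator_scale_eq c t hc]
  exact h2

lemma expIic_val {c : ℝ} (hc : 0 < c) (t : ℝ) :
    ∫ s in Set.Iic t, Real.exp (c * s) = Real.exp (c * t) / c := by
  rw [← MeasureTheory.integral_indicator measurableSet_Iic, ← indicator_scale_eq c t hc,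
    Measure.integral_comp_mul_left ((Set.Iic (c * t)).indicator Real.exp) c,
    MeasureTheory.integral_indicator measurableSet_Iic, integral_exp_Iic]
  rw [abs_of_pos (inv_pos.2 hc), smul_eq_mul]
  ring

lemma expIcc_val {c : ℝ} (hc : 0 < c) {u t : ℝ} (hut : u ≤ t) :
    ∫ s in Set.Icc u t, Real.exp (c * s) = (Real.exp (c * t) - Real.exp (c * u)) / c := by
  rw [MeasureTheory.integral_Icc_eq_integral_Ioc, ← intervalIntegral.integral_of_le hut]
  have := intervalIntegral.integral_comp_mul_left (a := u) (b := t) Real.exp hc.ne'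
  rw [this, integral_exp, smul_eq_mul]
  ring

lemma expMul_int {c B : ℝ} (hc : 0 < c) {h : ℝ → ℝ} (hm : Measurable h)
    (hb : ∀ s, |h s| ≤ B) (t : ℝ) :
    IntegrableOn (fun s => Real.exp (c * s) * h s) (Set.Iic t) := by
  refine Integrable.mono' (((expIic_int hc t).const_mul B))
    ((Real.measurable_exp.comp (measurable_const_mul c)).mul hm).aestronglyMeasurable
    (Filter.Eventually.of_forall fun s => ?_)
  rw [norm_mul, Real.norm_eq_abs, Real.norm_eq_abs, abs_of_pos (Real.exp_pos _)]
  calc Real.exp (c * s) * |h s| ≤ Real.exp (c * s) * B :=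
        mul_le_mul_of_nonneg_left (hb s) (Real.exp_pos _).le
    _ = B * Real.exp (c * s) := mul_comm _ _

lemma key_swap {c : ℝ} (hc : 0 < c) {φ : ℝ → ℝ} (hφm : Measurable φ) (hφ0 : ∀ u, 0 ≤ φ u)
    (hφi : ∀ r, IntegrableOn φ (Set.Iic r))
    (hφe : ∀ r, IntegrableOn (fun u => Real.exp (c * u) * φ u) (Set.Iic r)) (t : ℝ) :
    ∫ s in Set.Iic t, Real.exp (c * s) * (∫ u in Set.Iic s, φ u)
      = (∫ u in Set.Iic t, (Real.exp (c * t) - Real.exp (c * u)) * φ u) / c := by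
  set G : ℝ → ℝ := fun r => ∫ u in Set.Iic r, φ u with hG
  have hGmono : Monotone G := by
    intro r r' h
    exact setIntegral_mono_set (hφi r') (Filter.Eventually.of_forall hφ0)
      (HasSubset.Subset.eventuallyLE (Set.Iic_subset_Iic.2 h))
  have hGm : Measurable G := hGmono.measurable
  have hG0 : ∀ r, 0 ≤ G r := fun r =>
    setIntegral_nonneg measurableSet_Iic (fun u _ => hφ0 u)
  -- integrability of LHS integrand
  have hfi : IntegrableOn (fun s => Real.exp (c * s) * G s) (Set.Iic t) := by
    refine Integrable.mono' ((expIic_int hc t).const_mul (G t))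
      ((Real.measurable_exp.comp (measurable_const_mul c)).mul hGm).aestronglyMeasurable ?_
    refine (ae_restrict_iff' measurableSet_Iic).2 (Filter.Eventually.of_forall fun s hs => ?_)
    rw [norm_mul, Real.norm_eq_abs, Real.norm_eq_abs, abs_of_pos (Real.exp_pos _),
      abs_of_nonneg (hG0 s)]
    calc Real.exp (c * s) * G s ≤ Real.exp (c * s) * G t :=
          mul_le_mul_of_nonneg_left (hGmono hs) (Real.exp_pos _).le
      _ = G t * Real.exp (c * s) := mul_comm _ _
  set Φ : ℝ → ENNReal := fun u => ENNReal.ofReal (φ u) with hΦ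
  have hΦm : Measurable Φ := hφm.ennreal_ofReal
  set k : ℝ × ℝ → ENNReal := fun p =>
    if p.2 ≤ p.1 then ENNReal.ofReal (Real.exp (c * p.1)) * Φ p.2 else 0 with hk
  have hkm : Measurable k := by
    refine Measurable.ite (measurableSet_le measurable_snd measurable_fst) ?_ measurable_const
    exact ((Real.measurable_exp.comp (measurable_const_mul c)).comp measurable_fst).ennreal_ofReal.mul
      (hΦm.comp measurable_snd)
  -- step: express ofReal LHS as double lintegral
  have hL : ENNReal.ofReal (∫ s in Set.Iic t, Real.exp (c * s) * G s)
      = ∫⁻ s in Set.Iic t, ∫⁻ u in Set.Iic t, k (s, u) := by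
    rw [ofReal_integral_eq_lintegral_ofReal hfi
      (Filter.Eventually.of_forall fun s => mul_nonneg (Real.exp_pos _).le (hG0 s))]
    refine setLIntegral_congr_fun measurableSet_Iic
      (fun s hs => ?_)
    have h1 : ENNReal.ofReal (Real.exp (c * s) * G s)
        = ENNReal.ofReal (Real.exp (c * s)) * ENNReal.ofReal (G s) :=
      ENNReal.ofReal_mul (Real.exp_pos _).le
    have h2 : ENNReal.ofReal (G s) = ∫⁻ u in Set.Iic s, Φ u :=
      ofReal_integral_eq_lintegral_ofReal (hφi s) (Filter.Eventually.of_forall hφ0)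
    rw [h1, h2, ← lintegral_const_mul _ hΦm]
    have h3 : (volume.restrict (Set.Iic t)).restrict (Set.Iic s) = volume.restrict (Set.Iic s) := by
      rw [Measure.restrict_restrict measurableSet_Iic, Set.inter_eq_left.2 (Set.Iic_subset_Iic.2 hs)]
    rw [← h3, ← lintegral_indicator measurableSet_Iic]
    refine lintegral_congr fun u => ?_
    by_cases hus : u ≤ s
    · simp [hk, Set.indicator_apply, Set.mem_Iic, hus]
    · simp [hk, Set.indicator_apply, Set.mem_Iic, hus]
  -- swap
  have hswap : (∫⁻ s in Set.Iic t, ∫⁻ u in Set.Iic t, k (s, u))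
      = ∫⁻ u in Set.Iic t, ∫⁻ s in Set.Iic t, k (s, u) := by
    exact lintegral_lintegral_swap hkm.aemeasurable
  -- compute inner integral
  have hinner : ∀ u ∈ Set.Iic t, (∫⁻ s in Set.Iic t, k (s, u))
      = ENNReal.ofReal ((Real.exp (c * t) - Real.exp (c * u)) / c) * Φ u := by
    intro u hu
    have h4 : ∀ s : ℝ, k (s, u)
        = (Set.Ici u).indicator (fun s => ENNReal.ofReal (Real.exp (c * s))) s * Φ u := by
      intro s
      simp only [hk, Set.indicator_apply, Set.mem_Ici]
      by_cases hus : u ≤ s <;> simp [hus]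
    simp_rw [h4]
    rw [lintegral_mul_const _ (Measurable.indicator
      ((measurable_const_mul c).exp.ennreal_ofReal) measurableSet_Ici)]
    congr 1
    rw [lintegral_indicator measurableSet_Ici,
      Measure.restrict_restrict measurableSet_Ici, Set.Ici_inter_Iic]
    have hci : IntegrableOn (fun s => Real.exp (c * s)) (Set.Icc u t) :=
      (expIic_int hc t).mono_set Set.Icc_subset_Iic_self
    rw [← ofReal_integral_eq_lintegral_ofReal hci
      (Filter.Eventually.of_forall fun s => (Real.exp_pos _).le)]
    rw [expIcc_val hc hu]
  have hR : (∫⁻ u in Set.Iic t, ∫⁻ s in Set.Iic t, k (s, u))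
      = ENNReal.ofReal (∫ u in Set.Iic t, (Real.exp (c * t) - Real.exp (c * u)) / c * φ u) := by
    rw [setLIntegral_congr_fun measurableSet_Iic hinner]
    rw [ofReal_integral_eq_lintegral_ofReal]
    · refine setLIntegral_congr_fun measurableSet_Iic
        (fun u hu => ?_)
      rw [ENNReal.ofReal_mul]
      exact div_nonneg (sub_nonneg.2 (Real.exp_le_exp.2 (mul_le_mul_of_nonneg_left hu hc.le)))
        hc.le
    · have : (fun u => (Real.exp (c * t) - Real.exp (c * u)) / c * φ u)
          = fun u => (Real.exp (c * t) * φ u - Real.exp (c * u) * φ u) * c⁻¹ := by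
        funext u; field_simp
      rw [this]
      exact (((hφi t).const_mul (Real.exp (c * t))).sub (hφe t)).mul_const _
    · refine (ae_restrict_iff' measurableSet_Iic).2 (Filter.Eventually.of_forall fun u hu => ?_)
      exact mul_nonneg (div_nonneg (sub_nonneg.2 (Real.exp_le_exp.2
        (mul_le_mul_of_nonneg_left hu hc.le))) hc.le) (hφ0 u)
  -- conclude
  have hfinal : ENNReal.ofReal (∫ s in Set.Iic t, Real.exp (c * s) * G s)
      = ENNReal.ofReal (∫ u in Set.Iic t, (Real.exp (c * t) - Real.exp (c * u)) / c * φ u) := by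
    rw [hL, hswap, hR]
  have h5 : (0:ℝ) ≤ ∫ s in Set.Iic t, Real.exp (c * s) * G s :=
    setIntegral_nonneg measurableSet_Iic fun s _ => mul_nonneg (Real.exp_pos _).le (hG0 s)
  have h6 : (0:ℝ) ≤ ∫ u in Set.Iic t, (Real.exp (c * t) - Real.exp (c * u)) / c * φ u :=
    setIntegral_nonneg measurableSet_Iic fun u hu =>
      mul_nonneg (div_nonneg (sub_nonneg.2 (Real.exp_le_exp.2
        (mul_le_mul_of_nonneg_left hu hc.le))) hc.le) (hφ0 u)
  have := (ENNReal.ofReal_eq_ofReal_iff h5 h6).1 hfinal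
  rw [this, ← integral_div]
  refine setIntegral_congr_fun measurableSet_Iic fun u hu => ?_
  field_simp

lemma expMul_int_mono {c : ℝ} (hc : 0 < c) {h : ℝ → ℝ} (hm : Measurable h)
    (hmono : Monotone h) (h0 : ∀ s, 0 ≤ h s) (t : ℝ) :
    IntegrableOn (fun s => Real.exp (c * s) * h s) (Set.Iic t) := by
  refine Integrable.mono' ((expIic_int hc t).const_mul (h t))
    ((measurable_const_mul c).exp.mul hm).aestronglyMeasurable ?_
  refine (ae_restrict_iff' measurableSet_Iic).2 (Filter.Eventually.of_forall fun s hs => ?_)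
  rw [norm_mul, Real.norm_eq_abs, Real.norm_eq_abs, abs_of_pos (Real.exp_pos _),
    abs_of_nonneg (h0 s)]
  calc Real.exp (c * s) * h s ≤ Real.exp (c * s) * h t :=
        mul_le_mul_of_nonneg_left (hmono hs) (Real.exp_pos _).le
    _ = h t * Real.exp (c * s) := mul_comm _ _

/-- Forward infinite-horizon Gronwall inequality: if `0 ≤ y` is bounded continuous with
`y t ≤ ∫_{-∞}^t e^{-2μ(t-s)}(2L y(s) + g(s)) ds` and `0 < L < μ`, then
`y t ≤ ∫_{-∞}^t e^{-2(μ-L)(t-s)} g(s) ds`. -/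
theorem forward_infinite_horizon_gronwall
    (μ L : ℝ) (hμ : 0 < μ) (hL : 0 < L) (hLμ : L < μ)
    (g : ℝ → ℝ) (hgm : Measurable g) (hgb : ∃ B, ∀ s, g s ≤ B) (hg0 : ∀ s, 0 ≤ g s)
    (y : ℝ → ℝ) (hyc : Continuous y) (hy0 : ∀ t, 0 ≤ y t) (hyb : ∃ B, ∀ t, y t ≤ B)
    (hineq : ∀ t : ℝ,
      y t ≤ ∫ s in Set.Iic t, Real.exp (-2 * μ * (t - s)) * (2 * L * y s + g s)) :
    ∀ t : ℝ, y t ≤ ∫ s in Set.Iic t, Real.exp (-2 * (μ - L) * (t - s)) * g s := by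
  obtain ⟨Bg, hBg⟩ := hgb
  obtain ⟨By, hBy⟩ := hyb
  have hBg0 : 0 ≤ Bg := le_trans (hg0 0) (hBg 0)
  have hgabs : ∀ s, |g s| ≤ Bg := fun s => by rw [abs_of_nonneg (hg0 s)]; exact hBg s
  set a : ℝ := 2 * (μ - L) with ha_def
  have ha : 0 < a := by simp only [ha_def]; linarith
  set b : ℝ := 2 * μ with hb_def
  have hb : 0 < b := by simp only [hb_def]; linarith
  have hL2 : 0 < 2 * L := by linarith
  set φ : ℝ → ℝ := fun u => Real.exp (a * u) * g u with hφ_def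
  have hφm : Measurable φ := (measurable_const_mul a).exp.mul hgm
  have hφ0 : ∀ u, 0 ≤ φ u := fun u => mul_nonneg (Real.exp_pos _).le (hg0 u)
  have hφi : ∀ r, IntegrableOn φ (Set.Iic r) := fun r => expMul_int ha hgm hgabs r
  have hbg_int : ∀ r, IntegrableOn (fun s => Real.exp (b * s) * g s) (Set.Iic r) :=
    fun r => expMul_int hb hgm hgabs r
  have hφe : ∀ r, IntegrableOn (fun u => Real.exp (2 * L * u) * φ u) (Set.Iic r) := by
    intro r
    have heq : (fun u => Real.exp (2 * L * u) * φ u) = fun u => Real.exp (b * u) * g u := by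
      funext u
      simp only [hφ_def]
      rw [← mul_assoc, ← Real.exp_add]
      congr 2
      simp only [ha_def, hb_def]; ring
    rw [heq]; exact hbg_int r
  set G : ℝ → ℝ := fun r => ∫ u in Set.Iic r, φ u with hG_def
  have hGmono : Monotone G := fun r r' h =>
    setIntegral_mono_set (hφi r') (Filter.Eventually.of_forall hφ0)
      (HasSubset.Subset.eventuallyLE (Set.Iic_subset_Iic.2 h))
  have hGm : Measurable G := hGmono.measurable
  have hG0 : ∀ r, 0 ≤ G r := fun r => setIntegral_nonneg measurableSet_Iic fun u _ => hφ0 u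
  have hGb : ∀ r, G r ≤ Bg * (Real.exp (a * r) / a) := by
    intro r
    have h1 : ∫ u in Set.Iic r, Bg * Real.exp (a * u) = Bg * (Real.exp (a * r) / a) := by
      rw [integral_const_mul, expIic_val ha]
    rw [← h1]
    refine integral_mono_of_nonneg (Filter.Eventually.of_forall hφ0)
      ((expIic_int ha r).const_mul Bg) (Filter.Eventually.of_forall fun u => ?_)
    simp only [hφ_def]
    calc Real.exp (a * u) * g u ≤ Real.exp (a * u) * Bg :=
          mul_le_mul_of_nonneg_left (hBg u) (Real.exp_pos _).le
      _ = Bg * Real.exp (a * u) := mul_comm _ _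
  set F : ℝ → ℝ := fun r => Real.exp (-(a * r)) * G r with hF_def
  have hFm : Measurable F := ((measurable_const_mul a).neg.exp).mul hGm
  have hF0 : ∀ r, 0 ≤ F r := fun r => mul_nonneg (Real.exp_pos _).le (hG0 r)
  have hFb : ∀ r, F r ≤ Bg / a := by
    intro r
    simp only [hF_def]
    calc Real.exp (-(a * r)) * G r ≤ Real.exp (-(a * r)) * (Bg * (Real.exp (a * r) / a)) :=
          mul_le_mul_of_nonneg_left (hGb r) (Real.exp_pos _).le
      _ = Bg / a * (Real.exp (-(a * r)) * Real.exp (a * r)) := by ring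
      _ = Bg / a := by rw [← Real.exp_add, neg_add_cancel, Real.exp_zero, mul_one]
  -- Step 1 : the target integral equals F
  have step1 : ∀ r, (∫ s in Set.Iic r, Real.exp (-2 * (μ - L) * (r - s)) * g s) = F r := by
    intro r
    have heq : ∀ s : ℝ, Real.exp (-2 * (μ - L) * (r - s)) * g s
        = Real.exp (-(a * r)) * φ s := by
      intro s
      simp only [hφ_def]
      rw [← mul_assoc, ← Real.exp_add]
      congr 2
      simp only [ha_def]; ring
    simp only [hF_def, hG_def]
    rw [MeasureTheory.integral_congr_ae (Filter.Eventually.of_forall heq), integral_const_mul]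
  -- integrability of exp(b s) * F s
  have hbF_int : ∀ r, IntegrableOn (fun s => Real.exp (b * s) * F s) (Set.Iic r) := by
    intro r
    refine expMul_int (B := Bg / a) hb hFm (fun s => ?_) r
    rw [abs_of_nonneg (hF0 s)]; exact hFb s
  -- Step 2 : fixed point identity
  have step2 : ∀ r, F r = ∫ s in Set.Iic r, Real.exp (-2 * μ * (r - s)) * (2 * L * F s + g s) := by
    intro r
    have e1 : ∀ s : ℝ, Real.exp (-2 * μ * (r - s)) = Real.exp (-(b * r)) * Real.exp (b * s) := by
      intro s; rw [← Real.exp_add]; congr 1; simp only [hb_def]; ring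
    have e3 : ∀ s : ℝ, Real.exp (b * s) * Real.exp (-(a * s)) = Real.exp (2 * L * s) := by
      intro s; rw [← Real.exp_add]; congr 1; simp only [ha_def, hb_def]; ring
    have heq : ∀ s : ℝ, Real.exp (-2 * μ * (r - s)) * (2 * L * F s + g s)
        = Real.exp (-(b * r)) * (2 * L * (Real.exp (2 * L * s) * G s)
            + Real.exp (b * s) * g s) := by
      intro s
      rw [e1 s]
      simp only [hF_def]
      rw [← e3 s]
      ring
    rw [MeasureTheory.integral_congr_ae (Filter.Eventually.of_forall heq)]
    have I1 : IntegrableOn (fun s => Real.exp (2 * L * s) * G s) (Set.Iic r) :=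
      expMul_int_mono hL2 hGm hGmono hG0 r
    have hsum : ∫ s in Set.Iic r, (2 * L * (Real.exp (2 * L * s) * G s)
          + Real.exp (b * s) * g s)
        = 2 * L * (∫ s in Set.Iic r, Real.exp (2 * L * s) * G s)
          + ∫ s in Set.Iic r, Real.exp (b * s) * g s := by
      rw [MeasureTheory.integral_add (I1.const_mul (2 * L)) (hbg_int r), integral_const_mul]
    rw [integral_const_mul, hsum]
    have hkey := key_swap hL2 hφm hφ0 hφi hφe r
    rw [hkey]
    have hsub : ∫ u in Set.Iic r, (Real.exp (2 * L * r) - Real.exp (2 * L * u)) * φ u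
        = Real.exp (2 * L * r) * G r - ∫ u in Set.Iic r, Real.exp (b * u) * g u := by
      have heq2 : ∀ u : ℝ, (Real.exp (2 * L * r) - Real.exp (2 * L * u)) * φ u
          = Real.exp (2 * L * r) * φ u - Real.exp (b * u) * g u := by
        intro u
        simp only [hφ_def]
        rw [sub_mul]
        congr 1
        rw [← mul_assoc, ← Real.exp_add]
        congr 2
        simp only [ha_def, hb_def]; ring
      rw [MeasureTheory.integral_congr_ae (Filter.Eventually.of_forall heq2),
        MeasureTheory.integral_sub ((hφi r).const_mul _) (hbg_int r), integral_const_mul]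
    rw [hsub]
    have : 2 * L * ((Real.exp (2 * L * r) * G r - ∫ u in Set.Iic r, Real.exp (b * u) * g u)
        / (2 * L)) = Real.exp (2 * L * r) * G r - ∫ u in Set.Iic r, Real.exp (b * u) * g u := by
      field_simp
    rw [this]
    have efin : Real.exp (-(b * r)) * Real.exp (2 * L * r) = Real.exp (-(a * r)) := by
      rw [← Real.exp_add]; congr 1; simp only [ha_def, hb_def]; ring
    simp only [hF_def]
    rw [← efin]
    ring
  -- Step 3/4 : contraction via sup
  set M : ℝ := sSup (Set.range fun r => y r - F r) with hM_def
  have hbdd : BddAbove (Set.range fun r => y r - F r) := by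
    refine ⟨By, ?_⟩
    rintro x ⟨r, rfl⟩
    have := hF0 r
    have := hBy r
    simp only
    linarith
  have hne : (Set.range fun r => y r - F r).Nonempty := ⟨_, ⟨0, rfl⟩⟩
  have hM : ∀ r, y r - F r ≤ M := fun r => le_csSup hbdd ⟨r, rfl⟩
  have step4 : ∀ r, y r - F r ≤ L / μ * M := by
    intro r
    have e1 : ∀ s : ℝ, Real.exp (-2 * μ * (r - s)) = Real.exp (-(b * r)) * Real.exp (b * s) := by
      intro s; rw [← Real.exp_add]; congr 1; simp only [hb_def]; ring
    have hFMm : Measurable fun s => F s + M := hFm.add measurable_const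
    have hFMb : ∀ s, |F s + M| ≤ Bg / a + |M| := by
      intro s
      calc |F s + M| ≤ |F s| + |M| := abs_add_le _ _
        _ ≤ Bg / a + |M| := by
            rw [abs_of_nonneg (hF0 s)]
            exact add_le_add_left (hFb s) _
    have J1 : IntegrableOn (fun s => Real.exp (b * s) * (F s + M)) (Set.Iic r) :=
      expMul_int hb hFMm hFMb r
    have hRHSi : IntegrableOn
        (fun s => Real.exp (-2 * μ * (r - s)) * (2 * L * (F s + M) + g s)) (Set.Iic r) := by
      have hfun : (fun s => Real.exp (-2 * μ * (r - s)) * (2 * L * (F s + M) + g s))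
          = fun s => Real.exp (-(b * r)) * (2 * L * (Real.exp (b * s) * (F s + M))
              + Real.exp (b * s) * g s) := by
        funext s; rw [e1 s]; ring
      rw [hfun]
      exact ((J1.const_mul (2 * L)).add (hbg_int r)).const_mul _
    have h2 : y r ≤ ∫ s in Set.Iic r,
        Real.exp (-2 * μ * (r - s)) * (2 * L * (F s + M) + g s) := by
      refine le_trans (hineq r) (integral_mono_of_nonneg
        (Filter.Eventually.of_forall fun s => mul_nonneg (Real.exp_pos _).le
          (by have := hy0 s; have := hg0 s; positivity))
        hRHSi (Filter.Eventually.of_forall fun s => ?_))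
      have hys : y s ≤ F s + M := by have := hM s; linarith
      have : 2 * L * y s + g s ≤ 2 * L * (F s + M) + g s := by nlinarith
      exact mul_le_mul_of_nonneg_left this (Real.exp_pos _).le
    have h3 : ∫ s in Set.Iic r, Real.exp (-2 * μ * (r - s)) * (2 * L * (F s + M) + g s)
        = F r + L / μ * M := by
      have heq : ∀ s : ℝ, Real.exp (-2 * μ * (r - s)) * (2 * L * (F s + M) + g s)
          = Real.exp (-2 * μ * (r - s)) * (2 * L * F s + g s)
            + (2 * L * M * Real.exp (-(b * r))) * Real.exp (b * s) := by
        intro s; rw [e1 s]; ring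
      have hI1 : IntegrableOn
          (fun s => Real.exp (-2 * μ * (r - s)) * (2 * L * F s + g s)) (Set.Iic r) := by
        have hfun : (fun s => Real.exp (-2 * μ * (r - s)) * (2 * L * F s + g s))
            = fun s => Real.exp (-(b * r)) * (2 * L * (Real.exp (b * s) * F s)
                + Real.exp (b * s) * g s) := by
          funext s; rw [e1 s]; ring
        rw [hfun]
        exact (((hbF_int r).const_mul (2 * L)).add (hbg_int r)).const_mul _
      rw [MeasureTheory.integral_congr_ae (Filter.Eventually.of_forall heq),
        MeasureTheory.integral_add hI1 ((expIic_int hb r).const_mul _),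
        integral_const_mul, expIic_val hb, ← step2 r]
      congr 1
      have hcancel : Real.exp (-(b * r)) * Real.exp (b * r) = 1 := by
        rw [← Real.exp_add, neg_add_cancel, Real.exp_zero]
      rw [show 2 * L * M * Real.exp (-(b * r)) * (Real.exp (b * r) / b)
          = Real.exp (-(b * r)) * Real.exp (b * r) * (2 * L * M / b) by ring,
        hcancel, one_mul, hb_def]
      field_simp
    have := h2.trans h3.le
    linarith
  have hMle : M ≤ L / μ * M := csSup_le hne (by rintro x ⟨r, rfl⟩; exact step4 r)
  have hM0 : M ≤ 0 := by
    by_contra hpos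
    push_neg at hpos
    have : L / μ * M < M := by
      have h1 : L / μ < 1 := (div_lt_one hμ).2 hLμ
      nlinarith
    linarith
  intro t
  rw [step1 t]
  have h4 := step4 t
  have h5 : L / μ * M ≤ 0 := mul_nonpos_of_nonneg_of_nonpos (by positivity) hM0
  linarith
end

section
/- Let μ < 0 and 0 < L < -μ, and let g : ℝ → ℝ be measurable, bounded and nonnegative. Suppose y : ℝ → ℝ is bounded, nonnegative and satisfies y(t) ≤ ∫_{t}^{∞} e^{-2μ(t-s)}(2L y(s) + g(s)) ds for all t. Then y(t) ≤ ∫_{t}^{∞} e^{2(μ + L)(s-t)} g(s) ds for all t ∈ ℝ. -/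
open MeasureTheory

open Set Real Filter Topology
open scoped ENNReal

set_option maxHeartbeats 1000000


lemma expShift_integrableOn {c : ℝ} (hc : c < 0) (t : ℝ) :
    IntegrableOn (fun s : ℝ => exp (c * (s - t))) (Ici t) := by
  rw [integrableOn_Ici_iff_integrableOn_Ioi]
  have h1 : IntegrableOn (fun s : ℝ => exp ((-(-c)) * s)) (Ioi t) :=
    exp_neg_integrableOn_Ioi t (neg_pos.2 hc)
  have h2 := h1.mul_const (exp (-(c * t)))
  refine (integrable_congr ?_).mp h2
  filter_upwards with s
  rw [← exp_add]; ring_nf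

lemma expShift_tendsto {c : ℝ} (hc : c < 0) (t : ℝ) :
    Tendsto (fun s : ℝ => exp (c * (s - t)) / c) atTop (𝓝 0) := by
  have h1 : Tendsto (fun s : ℝ => c * (s - t)) atTop atBot := by
    apply Tendsto.const_mul_atTop_of_neg hc
    exact tendsto_atTop_add_const_right _ _ tendsto_id
  have h2 : Tendsto (fun s : ℝ => exp (c * (s - t))) atTop (𝓝 0) :=
    tendsto_exp_atBot.comp h1
  simpa using h2.div_const c

lemma integral_expShift {c : ℝ} (hc : c < 0) (t : ℝ) :
    ∫ s in Ici t, exp (c * (s - t)) = -1 / c := by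
  rw [MeasureTheory.integral_Ici_eq_integral_Ioi]
  have hd : ∀ x ∈ Ici t, HasDerivAt (fun s => exp (c * (s - t)) / c) (exp (c * (x - t))) x := by
    intro x _
    have h := (((hasDerivAt_id x).sub_const t).const_mul c).exp.div_const c
    simp only [mul_one] at h
    refine h.congr_deriv ?_
    simp [mul_div_assoc, div_self (ne_of_lt hc)]
  have := integral_Ioi_of_hasDerivAt_of_tendsto' hd
    ((expShift_integrableOn hc t).mono_set Ioi_subset_Ici_self) (expShift_tendsto hc t)
  rw [this]; simp; field_simp

lemma expShift_mul_integrableOn {c : ℝ} (hc : c < 0) (t : ℝ) {h : ℝ → ℝ}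
    (hm : Measurable h) {B : ℝ} (hB : ∀ s, |h s| ≤ B) :
    IntegrableOn (fun s : ℝ => exp (c * (s - t)) * h s) (Ici t) := by
  have hB0 : 0 ≤ B := le_trans (abs_nonneg _) (hB 0)
  refine Integrable.mono ((expShift_integrableOn hc t).const_mul B)
    ((measurable_exp.comp ((measurable_id.sub_const t).const_mul c)).mul hm).aestronglyMeasurable ?_
  filter_upwards with s
  rw [Real.norm_eq_abs, Real.norm_eq_abs, abs_mul, abs_of_pos (exp_pos _),
    abs_of_nonneg (by positivity : (0:ℝ) ≤ B * exp (c * (s - t))), mul_comm B]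
  exact mul_le_mul_of_nonneg_left (hB s) (exp_pos _).le

lemma integral_exp_linear (c d q p : ℝ) (hc : c ≠ 0) :
    ∫ s in q..p, exp (c * s + d) = (exp (c * p + d) - exp (c * q + d)) / c := by
  have hd : ∀ x ∈ Set.uIcc q p, HasDerivAt (fun s => exp (c * s + d) / c) (exp (c * x + d)) x := by
    intro x _
    have h := ((((hasDerivAt_id x).const_mul c).add_const d).exp).div_const c
    simpa [mul_div_assoc, div_self hc] using h
  have hi : IntervalIntegrable (fun x => exp (c * x + d)) volume q p :=
    (Real.continuous_exp.comp (by continuity)).intervalIntegrable q p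
  rw [intervalIntegral.integral_eq_sub_of_hasDerivAt hd hi]
  ring

lemma G_measurable {b : ℝ} {g : ℝ → ℝ} (hgm : Measurable g) :
    Measurable fun t => ∫ r in Ici t, exp (b * (r - t)) * g r := by
  have hF : Measurable (Function.uncurry fun t r : ℝ =>
      if t ≤ r then exp (b * (r - t)) * g r else 0) := by
    apply Measurable.ite (measurableSet_le measurable_fst measurable_snd)
    · exact (measurable_exp.comp ((measurable_snd.sub measurable_fst).const_mul b)).mul
        (hgm.comp measurable_snd)
    · exact measurable_const
  have hm := (hF.stronglyMeasurable.integral_prod_right (ν := volume)).measurable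
  have key : (fun t => ∫ r in Ici t, exp (b * (r - t)) * g r)
      = fun t => ∫ r, (fun t r : ℝ => if t ≤ r then exp (b * (r - t)) * g r else 0) t r := by
    funext t
    rw [← integral_indicator measurableSet_Ici]
    congr 1
  rw [key]
  exact hm

lemma key_swap_s6 {a b : ℝ} (ha : a < 0) (hab : a < b) (hb : b < 0)
    {g : ℝ → ℝ} (hgm : Measurable g) (hg0 : ∀ s, 0 ≤ g s) {Bg : ℝ} (hgB : ∀ s, g s ≤ Bg)
    (t : ℝ) :
    ∫ s in Ici t, exp (a * (s - t)) * ((b - a) * ∫ r in Ici s, exp (b * (r - s)) * g r)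
      = ∫ r in Ici t, (exp (b * (r - t)) - exp (a * (r - t))) * g r := by
  have hBg0 : 0 ≤ Bg := le_trans (hg0 0) (hgB 0)
  have habs : ∀ s, |g s| ≤ Bg := fun s => abs_le.2 ⟨by linarith [hg0 s], hgB s⟩
  set G : ℝ → ℝ := fun s => ∫ r in Ici s, exp (b * (r - s)) * g r with hGdef
  have hGi : ∀ s, IntegrableOn (fun r => exp (b * (r - s)) * g r) (Ici s) :=
    fun s => expShift_mul_integrableOn hb s hgm habs
  have hG0 : ∀ s, 0 ≤ G s := fun s =>
    setIntegral_nonneg measurableSet_Ici fun r _ => mul_nonneg (exp_pos _).le (hg0 r)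
  have hBGnn : (0:ℝ) ≤ Bg * (-1 / b) := by
    have h1 : (0:ℝ) < -1 / b := by
      rw [show (-1:ℝ) / b = 1 / (-b) by ring]
      exact div_pos one_pos (by linarith)
    exact mul_nonneg hBg0 h1.le
  have hGB : ∀ s, G s ≤ Bg * (-1 / b) := by
    intro s
    have h1 : G s ≤ ∫ r in Ici s, Bg * exp (b * (r - s)) :=
      setIntegral_mono_on (hGi s) ((expShift_integrableOn hb s).const_mul Bg)
        measurableSet_Ici fun r _ => by
          rw [mul_comm Bg]
          exact mul_le_mul_of_nonneg_left (hgB r) (exp_pos _).le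
    calc G s ≤ ∫ r in Ici s, Bg * exp (b * (r - s)) := h1
      _ = Bg * ∫ r in Ici s, exp (b * (r - s)) := by rw [integral_const_mul]
      _ = Bg * (-1 / b) := by rw [integral_expShift hb]
  have hGm : Measurable G := G_measurable hgm
  have hGabs : ∀ s, |G s| ≤ Bg * (-1 / b) := fun s => abs_le.2 ⟨by linarith [hG0 s], hGB s⟩
  -- LHS integrand integrable
  have hf1i : IntegrableOn (fun s => exp (a * (s - t)) * ((b - a) * G s)) (Ici t) := by
    refine expShift_mul_integrableOn ha t (hGm.const_mul _) (B := (b - a) * (Bg * (-1 / b))) ?_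
    intro s
    rw [abs_mul, abs_of_pos (by linarith : (0:ℝ) < b - a)]
    exact mul_le_mul_of_nonneg_left (hGabs s) (by linarith)
  have hf1nn : ∀ s, 0 ≤ exp (a * (s - t)) * ((b - a) * G s) := fun s =>
    mul_nonneg (exp_pos _).le (mul_nonneg (by linarith) (hG0 s))
  -- RHS integrand integrable
  have hf2i : IntegrableOn (fun r => (exp (b * (r - t)) - exp (a * (r - t))) * g r) (Ici t) := by
    have h1 := expShift_mul_integrableOn hb t hgm habs
    have h2 := expShift_mul_integrableOn ha t hgm habs
    refine (h1.sub h2).congr (Filter.Eventually.of_forall fun r => ?_)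
    simp only [Pi.sub_apply]
    ring
  have hf2nn : ∀ r ∈ Ici t, 0 ≤ (exp (b * (r - t)) - exp (a * (r - t))) * g r := by
    intro r hr
    apply mul_nonneg _ (hg0 r)
    have : a * (r - t) ≤ b * (r - t) :=
      mul_le_mul_of_nonneg_right hab.le (by simpa [sub_nonneg] using hr)
    simpa [sub_nonneg] using Real.exp_le_exp.2 this
  -- the product kernel
  set V : ℝ → ℝ → ℝ := fun s r => (exp (a * (s - t)) * (b - a)) * (exp (b * (r - s)) * g r)
    with hVdef
  have hVnn : ∀ s r, 0 ≤ V s r := fun s r =>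
    mul_nonneg (mul_nonneg (exp_pos _).le (by linarith)) (mul_nonneg (exp_pos _).le (hg0 r))
  set f : ℝ → ℝ → ℝ≥0∞ := fun s r =>
    if t ≤ s ∧ s ≤ r then ENNReal.ofReal (V s r) else 0 with hfdef
  have hfm : AEMeasurable (Function.uncurry f) (volume.prod volume) := by
    apply Measurable.aemeasurable
    have hset : MeasurableSet {p : ℝ × ℝ | t ≤ p.1 ∧ p.1 ≤ p.2} := by
      exact (measurableSet_le measurable_const measurable_fst).inter
        (measurableSet_le measurable_fst measurable_snd)
    have hVm : Measurable fun p : ℝ × ℝ => ENNReal.ofReal (V p.1 p.2) := by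
      apply ENNReal.measurable_ofReal.comp
      exact ((measurable_exp.comp ((measurable_fst.sub_const t).const_mul a)).mul_const _).mul
        ((measurable_exp.comp ((measurable_snd.sub measurable_fst).const_mul b)).mul
          (hgm.comp measurable_snd))
    exact Measurable.ite hset hVm measurable_const
  -- Step A/B : LHS as double lintegral
  have stepA : ENNReal.ofReal (∫ s in Ici t, exp (a * (s - t)) * ((b - a) * G s))
      = ∫⁻ s, ∫⁻ r, f s r := by
    rw [ofReal_integral_eq_lintegral_ofReal hf1i (Filter.Eventually.of_forall hf1nn)]
    rw [← lintegral_indicator measurableSet_Ici]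
    congr 1
    funext s
    by_cases hs : t ≤ s
    · rw [Set.indicator_of_mem (show s ∈ Ici t from hs)]
      have e1 : ENNReal.ofReal (exp (a * (s - t)) * ((b - a) * G s))
          = ENNReal.ofReal (exp (a * (s - t)) * (b - a)) * ENNReal.ofReal (G s) := by
        rw [show exp (a * (s - t)) * ((b - a) * G s) = (exp (a * (s - t)) * (b - a)) * G s
          from by ring, ENNReal.ofReal_mul (mul_nonneg (exp_pos _).le (by linarith))]
      have hmeas : Measurable fun r : ℝ => ENNReal.ofReal (exp (b * (r - s)) * g r) := by
        apply Measurable.ennreal_ofReal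
        exact (measurable_exp.comp ((measurable_id.sub_const s).const_mul b)).mul hgm
      rw [e1, ofReal_integral_eq_lintegral_ofReal (hGi s)
        (Filter.Eventually.of_forall fun r => mul_nonneg (exp_pos _).le (hg0 r)),
        ← lintegral_const_mul _ hmeas]
      rw [← lintegral_indicator measurableSet_Ici]
      congr 1
      funext r
      by_cases hr : s ≤ r
      · rw [Set.indicator_of_mem (show r ∈ Ici s from hr)]
        simp only [hfdef]
        simp only [hs, hr, and_self, if_true]
        rw [← ENNReal.ofReal_mul (mul_nonneg (exp_pos _).le (by linarith : (0:ℝ) ≤ b - a))]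
      · rw [Set.indicator_of_notMem (show r ∉ Ici s from hr)]
        simp only [hfdef]
        simp [hr]
    · rw [Set.indicator_of_notMem (show s ∉ Ici t from hs)]
      have : ∀ r, f s r = 0 := fun r => by
        simp only [hfdef]; simp [hs]
      simp [this]
  -- Step C : swap
  have stepC : (∫⁻ s, ∫⁻ r, f s r) = ∫⁻ r, ∫⁻ s, f s r :=
    lintegral_lintegral_swap hfm
  -- Step D : RHS as double lintegral
  have stepD : (∫⁻ r, ∫⁻ s, f s r)
      = ∫⁻ r in Ici t, ∫⁻ s in Icc t r, ENNReal.ofReal (V s r) := by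
    rw [← lintegral_indicator measurableSet_Ici]
    congr 1
    funext r
    by_cases hr : t ≤ r
    · rw [Set.indicator_of_mem (show r ∈ Ici t from hr), ← lintegral_indicator measurableSet_Icc]
      congr 1
      funext s
      by_cases hs : s ∈ Icc t r
      · rw [Set.indicator_of_mem hs]
        simp only [hfdef]
        simp only [hs.1, hs.2, and_self, if_true]
      · rw [Set.indicator_of_notMem hs]
        simp only [hfdef]
        exact if_neg (by simpa [Set.mem_Icc, not_and] using hs)
    · rw [Set.indicator_of_notMem (show r ∉ Ici t from hr)]
      have : ∀ s, f s r = 0 := fun s => by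
        simp only [hfdef]
        exact if_neg (fun h => hr (h.1.trans h.2))
      simp [this]
  -- Step E : inner integral computation
  have stepE : (∫⁻ r in Ici t, ∫⁻ s in Icc t r, ENNReal.ofReal (V s r))
      = ∫⁻ r in Ici t, ENNReal.ofReal ((exp (b * (r - t)) - exp (a * (r - t))) * g r) := by
    apply setLIntegral_congr_fun measurableSet_Ici
    intro r hr
    beta_reduce
    have hVc : Continuous fun s => V s r := by
      apply Continuous.mul
      · exact (Real.continuous_exp.comp (by continuity)).mul continuous_const
      · exact (Real.continuous_exp.comp (by continuity)).mul continuous_const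
    rw [ofReal_integral_eq_lintegral_ofReal (hVc.integrableOn_Icc)
      (Filter.Eventually.of_forall fun s => hVnn s r) |>.symm]
    congr 1
    rw [integral_Icc_eq_integral_Ioc, ← intervalIntegral.integral_of_le hr]
    have hrw : ∀ s, V s r = ((b - a) * g r) * exp ((a - b) * s + (b * r - a * t)) := by
      intro s
      rw [show (a - b) * s + (b * r - a * t) = a * (s - t) + b * (r - s) by ring, Real.exp_add]
      rw [hVdef]; ring
    simp_rw [hrw]
    rw [intervalIntegral.integral_const_mul, integral_exp_linear _ _ _ _
      (ne_of_lt (show a - b < 0 by linarith))]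
    rw [show (a - b) * r + (b * r - a * t) = a * (r - t) by ring,
      show (a - b) * t + (b * r - a * t) = b * (r - t) by ring]
    field_simp [sub_ne_zero.mpr (ne_of_lt hab)]
    ring
  -- Step F : back to real integral
  have stepF : (∫⁻ r in Ici t, ENNReal.ofReal ((exp (b * (r - t)) - exp (a * (r - t))) * g r))
      = ENNReal.ofReal (∫ r in Ici t, (exp (b * (r - t)) - exp (a * (r - t))) * g r) := by
    rw [ofReal_integral_eq_lintegral_ofReal hf2i
      ((ae_restrict_iff' measurableSet_Ici).2 (Filter.Eventually.of_forall hf2nn))]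
  have := stepA.trans (stepC.trans (stepD.trans (stepE.trans stepF)))
  rwa [ENNReal.ofReal_eq_ofReal_iff
    (setIntegral_nonneg measurableSet_Ici fun s _ => hf1nn s)
    (setIntegral_nonneg measurableSet_Ici hf2nn)] at this

theorem gronwall_core {a b : ℝ} (ha : a < 0) (hab : a < b) (hb : b < 0)
    {g : ℝ → ℝ} (hgm : Measurable g) (hg0 : ∀ s, 0 ≤ g s) {Bg : ℝ} (hgB : ∀ s, g s ≤ Bg)
    {y : ℝ → ℝ} (hym : Measurable y) (hy0 : ∀ t, 0 ≤ y t) {By : ℝ} (hyB : ∀ t, y t ≤ By)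
    (hineq : ∀ t, y t ≤ ∫ s in Ici t, exp (a * (s - t)) * ((b - a) * y s + g s)) :
    ∀ t, y t ≤ ∫ s in Ici t, exp (b * (s - t)) * g s := by
  have hBg0 : 0 ≤ Bg := le_trans (hg0 0) (hgB 0)
  have habs : ∀ s, |g s| ≤ Bg := fun s => abs_le.2 ⟨by linarith [hg0 s], hgB s⟩
  have hBy0 : 0 ≤ By := le_trans (hy0 0) (hyB 0)
  have hyabs : ∀ t, |y t| ≤ By := fun t => abs_le.2 ⟨by linarith [hy0 t], hyB t⟩
  set G : ℝ → ℝ := fun s => ∫ r in Ici s, exp (b * (r - s)) * g r with hGdef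
  have hGi : ∀ s, IntegrableOn (fun r => exp (b * (r - s)) * g r) (Ici s) :=
    fun s => expShift_mul_integrableOn hb s hgm habs
  have hG0 : ∀ s, 0 ≤ G s := fun s =>
    setIntegral_nonneg measurableSet_Ici fun r _ => mul_nonneg (exp_pos _).le (hg0 r)
  have hBGnn : (0:ℝ) ≤ Bg * (-1 / b) := by
    have h1 : (0:ℝ) < -1 / b := by
      rw [show (-1:ℝ) / b = 1 / (-b) by ring]
      exact div_pos one_pos (by linarith)
    exact mul_nonneg hBg0 h1.le
  have hGB : ∀ s, G s ≤ Bg * (-1 / b) := by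
    intro s
    have h1 : G s ≤ ∫ r in Ici s, Bg * exp (b * (r - s)) :=
      setIntegral_mono_on (hGi s) ((expShift_integrableOn hb s).const_mul Bg)
        measurableSet_Ici fun r _ => by
          rw [mul_comm Bg]
          exact mul_le_mul_of_nonneg_left (hgB r) (exp_pos _).le
    calc G s ≤ ∫ r in Ici s, Bg * exp (b * (r - s)) := h1
      _ = Bg * ∫ r in Ici s, exp (b * (r - s)) := by rw [integral_const_mul]
      _ = Bg * (-1 / b) := by rw [integral_expShift hb]
  have hGm : Measurable G := G_measurable hgm
  have hGabs : ∀ s, |G s| ≤ Bg * (-1 / b) := fun s => abs_le.2 ⟨by linarith [hG0 s], hGB s⟩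
  -- integrability of the pieces
  have hyai : ∀ t, IntegrableOn (fun s => exp (a * (s - t)) * ((b - a) * y s)) (Ici t) := by
    intro t
    refine expShift_mul_integrableOn ha t (hym.const_mul _) (B := (b - a) * By) fun s => ?_
    rw [abs_mul, abs_of_pos (by linarith : (0:ℝ) < b - a)]
    exact mul_le_mul_of_nonneg_left (hyabs s) (by linarith)
  have hGai : ∀ t, IntegrableOn (fun s => exp (a * (s - t)) * ((b - a) * G s)) (Ici t) := by
    intro t
    refine expShift_mul_integrableOn ha t (hGm.const_mul _) (B := (b - a) * (Bg * (-1 / b)))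
      fun s => ?_
    rw [abs_mul, abs_of_pos (by linarith : (0:ℝ) < b - a)]
    exact mul_le_mul_of_nonneg_left (hGabs s) (by linarith)
  have hgai : ∀ t, IntegrableOn (fun s => exp (a * (s - t)) * g s) (Ici t) :=
    fun t => expShift_mul_integrableOn ha t hgm habs
  have hgbi : ∀ t, IntegrableOn (fun s => exp (b * (s - t)) * g s) (Ici t) :=
    fun t => expShift_mul_integrableOn hb t hgm habs
  -- fixed point property : T G = G
  have hTG : ∀ t, (∫ s in Ici t, exp (a * (s - t)) * ((b - a) * G s + g s)) = G t := by
    intro t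
    have hsplit : (∫ s in Ici t, exp (a * (s - t)) * ((b - a) * G s + g s))
        = (∫ s in Ici t, exp (a * (s - t)) * ((b - a) * G s))
          + ∫ s in Ici t, exp (a * (s - t)) * g s := by
      rw [← integral_add (hGai t) (hgai t)]
      exact setIntegral_congr_fun measurableSet_Ici fun s _ => by ring
    have hdiff : (∫ r in Ici t, (exp (b * (r - t)) - exp (a * (r - t))) * g r)
        = (∫ r in Ici t, exp (b * (r - t)) * g r) - ∫ r in Ici t, exp (a * (r - t)) * g r := by
      rw [← integral_sub (hgbi t) (hgai t)]
      exact setIntegral_congr_fun measurableSet_Ici fun r _ => by ring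
    rw [hsplit, key_swap_s6 ha hab hb hgm hg0 hgB t, hdiff, sub_add_cancel]
  -- the supremum argument
  set M : ℝ := sSup (Set.range fun t => y t - G t) with hMdef
  have hbdd : BddAbove (Set.range fun t => y t - G t) := by
    refine ⟨By, ?_⟩
    rintro x ⟨s, rfl⟩
    have := hG0 s
    have := hyB s
    simp only
    linarith
  have hMle : ∀ s, y s - G s ≤ M := fun s => le_csSup hbdd ⟨s, rfl⟩
  have hkey : ∀ t, y t - G t ≤ ((b - a) * M) * (-1 / a) := by
    intro t
    have h1 : y t - G t ≤ (∫ s in Ici t, exp (a * (s - t)) * ((b - a) * y s + g s))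
        - ∫ s in Ici t, exp (a * (s - t)) * ((b - a) * G s + g s) := by
      have := hineq t
      rw [hTG t] at *
      linarith [hineq t]
    have hsplit1 : (∫ s in Ici t, exp (a * (s - t)) * ((b - a) * y s + g s))
        = (∫ s in Ici t, exp (a * (s - t)) * ((b - a) * y s))
          + ∫ s in Ici t, exp (a * (s - t)) * g s := by
      rw [← integral_add (hyai t) (hgai t)]
      exact setIntegral_congr_fun measurableSet_Ici fun s _ => by ring
    have hsplit2 : (∫ s in Ici t, exp (a * (s - t)) * ((b - a) * G s + g s))
        = (∫ s in Ici t, exp (a * (s - t)) * ((b - a) * G s))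
          + ∫ s in Ici t, exp (a * (s - t)) * g s := by
      rw [← integral_add (hGai t) (hgai t)]
      exact setIntegral_congr_fun measurableSet_Ici fun s _ => by ring
    have h2 : (∫ s in Ici t, exp (a * (s - t)) * ((b - a) * y s))
        - (∫ s in Ici t, exp (a * (s - t)) * ((b - a) * G s))
        = ∫ s in Ici t, exp (a * (s - t)) * ((b - a) * (y s - G s)) := by
      rw [← integral_sub (hyai t) (hGai t)]
      exact (setIntegral_congr_fun measurableSet_Ici fun s _ => by ring).symm
    have h3 : (∫ s in Ici t, exp (a * (s - t)) * ((b - a) * (y s - G s)))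
        ≤ ∫ s in Ici t, ((b - a) * M) * exp (a * (s - t)) := by
      refine setIntegral_mono_on ?_ ((expShift_integrableOn ha t).const_mul _)
        measurableSet_Ici fun s _ => ?_
      · refine expShift_mul_integrableOn ha t ((hym.sub hGm).const_mul _)
          (B := (b - a) * (By + Bg * (-1 / b))) fun s => ?_
        rw [abs_mul, abs_of_pos (by linarith : (0:ℝ) < b - a)]
        refine mul_le_mul_of_nonneg_left ?_ (by linarith)
        calc |y s - G s| ≤ |y s| + |G s| := abs_sub _ _
          _ ≤ By + Bg * (-1 / b) := add_le_add (hyabs s) (hGabs s)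
      · rw [mul_comm]
        exact mul_le_mul_of_nonneg_right
          (mul_le_mul_of_nonneg_left (hMle s) (by linarith)) (exp_pos _).le
    have h4 : (∫ s in Ici t, ((b - a) * M) * exp (a * (s - t))) = ((b - a) * M) * (-1 / a) := by
      rw [integral_const_mul, integral_expShift ha]
    linarith
  have hM : M ≤ ((b - a) * M) * (-1 / a) := by
    refine csSup_le ⟨y 0 - G 0, ⟨0, rfl⟩⟩ ?_
    rintro x ⟨s, rfl⟩
    exact hkey s
  have hM0 : M ≤ 0 := by
    have hia : (0:ℝ) < -1 / a := by
      rw [show (-1:ℝ) / a = 1 / (-a) by ring]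
      exact div_pos one_pos (by linarith)
    have hlt : (b - a) * (-1 / a) < 1 := by
      have h2 : (-a) * (-1 / a) = 1 := by field_simp [ne_of_lt ha]
      have h3 := mul_lt_mul_of_pos_right (show b - a < -a by linarith) hia
      linarith
    by_cases hMpos : 0 < M
    · have h4 := mul_lt_mul_of_pos_right hlt hMpos
      nlinarith [hM]
    · linarith [not_lt.1 hMpos]
  intro t
  have := hMle t
  have := hM0
  change y t ≤ G t
  linarith

/-- Backward infinite-horizon Gronwall inequality: if `0 ≤ y` is bounded continuous with
`y t ≤ ∫_t^∞ e^{-2μ(t-s)}(2L y(s) + g(s)) ds` with `μ < 0` and `0 < L < -μ`, then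
`y t ≤ ∫_t^∞ e^{2(μ+L)(s-t)} g(s) ds`. -/
theorem backward_infinite_horizon_gronwall
    (μ L : ℝ) (hμ : μ < 0) (hL : 0 < L) (hLμ : L < -μ)
    (g : ℝ → ℝ) (hgm : Measurable g) (hgb : ∃ B, ∀ s, g s ≤ B) (hg0 : ∀ s, 0 ≤ g s)
    (y : ℝ → ℝ) (hyc : Continuous y) (hy0 : ∀ t, 0 ≤ y t) (hyb : ∃ B, ∀ t, y t ≤ B)
    (hineq : ∀ t : ℝ,
      y t ≤ ∫ s in Set.Ici t, Real.exp (-2 * μ * (t - s)) * (2 * L * y s + g s)) :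
    ∀ t : ℝ, y t ≤ ∫ s in Set.Ici t, Real.exp (2 * (μ + L) * (s - t)) * g s := by
  obtain ⟨Bg, hgB⟩ := hgb
  obtain ⟨By, hyB⟩ := hyb
  have ha : (2 * μ : ℝ) < 0 := by linarith
  have hb : (2 * (μ + L) : ℝ) < 0 := by linarith
  have hab : (2 * μ : ℝ) < 2 * (μ + L) := by linarith
  have hineq' : ∀ t, y t ≤ ∫ s in Set.Ici t,
      exp ((2 * μ) * (s - t)) * ((2 * (μ + L) - 2 * μ) * y s + g s) := by
    intro t
    have hfun : (fun s => Real.exp (-2 * μ * (t - s)) * (2 * L * y s + g s))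
        = fun s => exp ((2 * μ) * (s - t)) * ((2 * (μ + L) - 2 * μ) * y s + g s) := by
      funext s
      rw [show (-2) * μ * (t - s) = (2 * μ) * (s - t) by ring]
      ring
    have h := hineq t
    rw [hfun] at h
    exact h
  exact gronwall_core ha hab hb hgm hg0 hgB hyc.measurable hy0 hyB hineq'
end

section
/- Suppose y : ℝ → ℝ is a differentiable function satisfying y'(t) = -μ y(t) + f(t) with μ < 0, where f is continuous and y, f are bounded on ℝ. Then y(t) = -∫_t^∞ e^{-μ(t-s)} f(s) ds for all t (the backward representation), and consequently y(t)² ≤ -2∫_t^∞ e^{-2μ(t-s)} y(s) f(s) ds whenever the right-hand side converges. -/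
open MeasureTheory Filter

lemma key_ftc (t : ℝ) (F G : ℝ → ℝ) (hd : ∀ x, HasDerivAt F (G x) x)
    (hint : IntegrableOn G (Set.Ioi t)) (hlim : Tendsto F atTop (nhds 0)) :
    F t = -∫ x in Set.Ici t, G x := by
  rw [MeasureTheory.integral_Ici_eq_integral_Ioi]
  have h := MeasureTheory.integral_Ioi_of_hasDerivAt_of_tendsto
    (hd t).continuousAt.continuousWithinAt (fun x hx => hd x) hint hlim
  linarith [h]

lemma mul_tendsto_atBot' (μ t : ℝ) (hμ : μ < 0) :
    Tendsto (fun s : ℝ => μ * (s - t)) atTop atBot := by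
  have h1 : Tendsto (fun s : ℝ => s - t) atTop atTop :=
    tendsto_atTop_add_const_right _ _ tendsto_id
  exact Tendsto.const_mul_atTop_of_neg hμ h1

lemma exp_deriv' (μ t s : ℝ) :
    HasDerivAt (fun s => Real.exp (μ * (s - t))) (μ * Real.exp (μ * (s - t))) s := by
  have h1 : HasDerivAt (fun s : ℝ => μ * (s - t)) μ s := by
    simpa using ((hasDerivAt_id s).sub_const t).const_mul μ
  simpa [mul_comm] using h1.exp

lemma exp_integrableOn (μ t c : ℝ) (hμ : μ < 0) (g : ℝ → ℝ) (hg : Continuous g)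
    (hb : ∀ s, |g s| ≤ c) :
    IntegrableOn (fun s => Real.exp (μ * (s - t)) * g s) (Set.Ioi t) := by
  have hbase : IntegrableOn (fun s : ℝ => Real.exp (-(-μ) * s)) (Set.Ioi t) :=
    exp_neg_integrableOn_Ioi t (by linarith)
  have hbase2 : IntegrableOn (fun s : ℝ => (Real.exp (-μ * t) * c) * Real.exp (-(-μ) * s))
      (Set.Ioi t) := hbase.const_mul _
  apply hbase2.mono' (by fun_prop : Continuous fun s => Real.exp (μ * (s - t)) * g s).aestronglyMeasurable.restrict
  filter_upwards with s
  have hc : (0:ℝ) ≤ c := le_trans (abs_nonneg _) (hb 0)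
  have : |Real.exp (μ * (s - t)) * g s| = Real.exp (μ * (s - t)) * |g s| := by
    rw [abs_mul, abs_of_pos (Real.exp_pos _)]
  rw [Real.norm_eq_abs, this]
  have h2 : Real.exp (μ * (s - t)) * |g s| ≤ Real.exp (μ * (s - t)) * c :=
    mul_le_mul_of_nonneg_left (hb s) (Real.exp_pos _).le
  calc Real.exp (μ * (s - t)) * |g s| ≤ Real.exp (μ * (s - t)) * c := h2
    _ = Real.exp (-μ * t) * c * Real.exp (-(-μ) * s) := by
        rw [show μ * (s - t) = -μ * t + -(-μ) * s from by ring, Real.exp_add]; ring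

lemma exp_tendsto_zero (μ t c : ℝ) (hμ : μ < 0) (g : ℝ → ℝ) (hb : ∀ s, |g s| ≤ c) :
    Tendsto (fun s => Real.exp (μ * (s - t)) * g s) atTop (nhds 0) := by
  have hexp : Tendsto (fun s => Real.exp (μ * (s - t))) atTop (nhds 0) :=
    Real.tendsto_exp_atBot.comp (mul_tendsto_atBot' μ t hμ)
  have hc : Tendsto (fun s => c * Real.exp (μ * (s - t))) atTop (nhds 0) := by
    simpa using hexp.const_mul c
  apply squeeze_zero_norm _ hc
  intro s
  rw [Real.norm_eq_abs, abs_mul, abs_of_pos (Real.exp_pos _)]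
  calc Real.exp (μ * (s - t)) * |g s| ≤ Real.exp (μ * (s - t)) * c :=
        mul_le_mul_of_nonneg_left (hb s) (Real.exp_pos _).le
    _ = c * Real.exp (μ * (s - t)) := mul_comm _ _

/-- Backward variation-of-constants representation: if `y' = -μy + f` with `μ < 0` and
`y`, `f` bounded (`f` continuous), then `y(t) = -∫_t^∞ e^{-μ(t-s)} f(s) ds`, and consequently
`y(t)² ≤ -2∫_t^∞ e^{-2μ(t-s)} y(s)f(s) ds` whenever the latter integral converges. -/
theorem backward_representation_of_bounded_solution
    (μ : ℝ) (hμ : μ < 0)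
    (y f : ℝ → ℝ)
    (hy : ∀ t : ℝ, HasDerivAt y (-μ * y t + f t) t)
    (hfc : Continuous f)
    (hyb : ∃ B, ∀ t, |y t| ≤ B) (hfb : ∃ B, ∀ t, |f t| ≤ B) :
    (∀ t : ℝ, y t = -∫ s in Set.Ici t, Real.exp (-μ * (t - s)) * f s) ∧
    ∀ t : ℝ, IntegrableOn (fun s => Real.exp (-2 * μ * (t - s)) * (y s * f s)) (Set.Ici t) →
      (y t) ^ 2 ≤ -2 * ∫ s in Set.Ici t, Real.exp (-2 * μ * (t - s)) * (y s * f s) := by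
  obtain ⟨By, hBy⟩ := hyb
  obtain ⟨Bf, hBf⟩ := hfb
  have hexr : ∀ t s : ℝ, -μ * (t - s) = μ * (s - t) := by intro t s; ring
  have hexr2 : ∀ t s : ℝ, -2 * μ * (t - s) = (2*μ) * (s - t) := by intro t s; ring
  constructor
  · intro t
    have hd : ∀ s, HasDerivAt (fun s => Real.exp (μ * (s - t)) * y s)
        (Real.exp (-μ * (t - s)) * f s) s := by
      intro s
      have h := (exp_deriv' μ t s).mul (hy s)
      refine h.congr_deriv ?_
      rw [hexr t s]; ring
    have hint : IntegrableOn (fun s => Real.exp (-μ * (t - s)) * f s) (Set.Ioi t) := by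
      have := exp_integrableOn μ t Bf hμ f hfc hBf
      apply this.congr_fun _ measurableSet_Ioi
      intro s _
      show Real.exp (μ * (s - t)) * f s = Real.exp (-μ * (t - s)) * f s
      rw [hexr t s]
    have hlim := exp_tendsto_zero μ t By hμ y hBy
    have := key_ftc t _ _ hd hint hlim
    simpa using this
  · intro t hI
    have hd : ∀ s, HasDerivAt (fun s => Real.exp ((2*μ) * (s - t)) * (y s)^2)
        (2 * (Real.exp (-2 * μ * (t - s)) * (y s * f s))) s := by
      intro s
      have hy2 : HasDerivAt (fun s => (y s)^2) (2 * y s * (-μ * y s + f s)) s := by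
        exact (((hy s).mul (hy s)).congr_deriv (by ring)).congr_of_eventuallyEq
          (Filter.Eventually.of_forall fun x => by simp [pow_two, Pi.mul_apply])
      have h := (exp_deriv' (2*μ) t s).mul hy2
      refine h.congr_deriv ?_
      rw [hexr2 t s]; ring
    have hint : IntegrableOn (fun s => 2 * (Real.exp (-2 * μ * (t - s)) * (y s * f s)))
        (Set.Ioi t) := by
      exact ((hI.mono_set Set.Ioi_subset_Ici_self).const_mul 2)
    have hlim : Tendsto (fun s => Real.exp ((2*μ) * (s - t)) * (y s)^2) atTop (nhds 0) := by
      apply exp_tendsto_zero (2*μ) t (By^2) (by linarith) (fun s => (y s)^2)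
      intro s
      rw [abs_of_nonneg (sq_nonneg _), sq, sq]
      have h0 : (0:ℝ) ≤ By := le_trans (abs_nonneg _) (hBy 0)
      have := abs_le.1 (hBy s)
      nlinarith [abs_le.1 (hBy s)]
    have heq := key_ftc t _ _ hd hint hlim
    simp only [Real.exp_zero, sub_self, mul_zero, one_mul] at heq
    rw [heq, MeasureTheory.integral_const_mul]
    apply le_of_eq
    ring
end

section
/- Suppose y : ℝ → ℝ is differentiable, bounded, and satisfies y'(t) = -μ y(t) + f(t) with μ > 0, where f is continuous and bounded. Then y(t) = ∫_{-∞}^t e^{-μ(t-s)} f(s) ds for all t, and y(t)² ≤ 2∫_{-∞}^t e^{-2μ(t-s)} y(s) f(s) ds whenever the right-hand side converges. -/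
open MeasureTheory Set Filter

lemma rep_lemma (μ : ℝ) (hμ : 0 < μ) (y f : ℝ → ℝ)
    (hy : ∀ t : ℝ, HasDerivAt y (-μ * y t + f t) t)
    (hfc : Continuous f)
    (hyb : ∃ B, ∀ t, |y t| ≤ B) (hfb : ∃ B, ∀ t, |f t| ≤ B) :
    ∀ t : ℝ, IntegrableOn (fun s => Real.exp (-μ * (t - s)) * f s) (Set.Iic t) ∧
      y t = ∫ s in Set.Iic t, Real.exp (-μ * (t - s)) * f s := by
  obtain ⟨By, hBy⟩ := hyb
  obtain ⟨Bf, hBf⟩ := hfb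
  have hycont : Continuous y := continuous_iff_continuousAt.mpr fun s => (hy s).continuousAt
  intro t
  -- continuity of integrand
  have hFc : Continuous fun s => Real.exp (-μ * (t - s)) * f s := by fun_prop
  -- FTC identity on intervals
  have key : ∀ a : ℝ, (∫ s in a..t, Real.exp (-μ * (t - s)) * f s)
      = y t - Real.exp (-μ * (t - a)) * y a := by
    intro a
    have hg : ∀ s : ℝ, HasDerivAt (fun s => Real.exp (-μ * (t - s)) * y s)
        (Real.exp (-μ * (t - s)) * f s) s := by
      intro s
      have h1 : HasDerivAt (fun s => Real.exp (-μ * (t - s))) (μ * Real.exp (-μ * (t - s))) s := by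
        have h0 : HasDerivAt (fun s : ℝ => -μ * (t - s)) μ s := by
          simpa using ((hasDerivAt_id s).const_sub t).const_mul (-μ)
        simpa [mul_comm] using h0.exp
      have := h1.fun_mul (hy s)
      exact this.congr_deriv (by ring)
    have := intervalIntegral.integral_eq_sub_of_hasDerivAt
      (f := fun s => Real.exp (-μ * (t - s)) * y s)
      (fun s _ => hg s) (hFc.intervalIntegrable a t)
    rw [this]; simp
  -- integrability on Iic t
  have hint : IntegrableOn (fun s => Real.exp (-μ * (t - s)) * f s) (Set.Iic t) := by
    refine integrableOn_Iic_of_intervalIntegral_norm_bounded ((|Bf| + 1) / μ) t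
      (fun i => (hFc.intervalIntegrable _ _).1) tendsto_id ?_
    filter_upwards [Iic_mem_atBot t] with a (ha : a ≤ t)
    have hbound : ∀ s ∈ Set.Icc a t,
        ‖Real.exp (-μ * (t - s)) * f s‖ ≤ (|Bf| + 1) * Real.exp (-μ * (t - s)) := by
      intro s _
      rw [norm_mul, Real.norm_eq_abs, Real.norm_eq_abs, abs_of_pos (Real.exp_pos _), mul_comm]
      have : |f s| ≤ |Bf| + 1 := le_trans (hBf s) (le_trans (le_abs_self _) (by linarith))
      exact mul_le_mul_of_nonneg_right this (Real.exp_pos _).le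
    have hexp : (∫ s in a..t, (|Bf| + 1) * Real.exp (-μ * (t - s)))
        = (|Bf| + 1) * ((1 - Real.exp (-μ * (t - a))) / μ) := by
      have hg : ∀ s : ℝ, HasDerivAt (fun s => Real.exp (-μ * (t - s)) / μ)
          (Real.exp (-μ * (t - s))) s := by
        intro s
        have h0 : HasDerivAt (fun s : ℝ => -μ * (t - s)) μ s := by
          simpa using ((hasDerivAt_id s).const_sub t).const_mul (-μ)
        have := (h0.exp).div_const μ
        exact this.congr_deriv (by field_simp)
      rw [intervalIntegral.integral_const_mul,
        intervalIntegral.integral_eq_sub_of_hasDerivAt (fun s _ => hg s)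
          (Continuous.intervalIntegrable (by fun_prop) a t)]
      simp [sub_div]
    calc (∫ s in a..t, ‖Real.exp (-μ * (t - s)) * f s‖)
        ≤ ∫ s in a..t, (|Bf| + 1) * Real.exp (-μ * (t - s)) := by
          apply intervalIntegral.integral_mono_on ha
            (hFc.norm.intervalIntegrable a t)
            (Continuous.intervalIntegrable (by fun_prop) a t) hbound
      _ = (|Bf| + 1) * ((1 - Real.exp (-μ * (t - a))) / μ) := hexp
      _ ≤ (|Bf| + 1) / μ := by
          rw [mul_div_assoc']
          gcongr
          nlinarith [Real.exp_pos (-μ * (t - a)), abs_nonneg Bf]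
  refine ⟨hint, ?_⟩
  -- limits
  have hlim1 : Tendsto (fun a => ∫ s in a..t, Real.exp (-μ * (t - s)) * f s) atBot
      (nhds (∫ s in Set.Iic t, Real.exp (-μ * (t - s)) * f s)) :=
    intervalIntegral_tendsto_integral_Iic t hint tendsto_id
  have hlim2 : Tendsto (fun a => y t - Real.exp (-μ * (t - a)) * y a) atBot (nhds (y t)) := by
    have h0 : Tendsto (fun a => Real.exp (-μ * (t - a)) * y a) atBot (nhds 0) := by
      have hb : ∀ a : ℝ, ‖Real.exp (-μ * (t - a)) * y a‖ ≤
          Real.exp (-μ * (t - a)) * (|By| + 1) := by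
        intro a
        rw [norm_mul, Real.norm_eq_abs, Real.norm_eq_abs, abs_of_pos (Real.exp_pos _)]
        exact mul_le_mul_of_nonneg_left
          (le_trans (hBy a) (le_trans (le_abs_self _) (by linarith))) (Real.exp_pos _).le
      apply squeeze_zero_norm hb
      · have harg : Tendsto (fun a : ℝ => -μ * (t - a)) atBot atBot := by
          have : (fun a : ℝ => -μ * (t - a)) = fun a => μ * a + (-(μ * t)) := by
            ext a; ring
          rw [this]
          exact Filter.tendsto_atBot_add_const_right _ _ (Filter.tendsto_id.const_mul_atBot hμ)
        have := Real.tendsto_exp_atBot.comp harg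
        simpa using this.mul_const (|By| + 1)
    simpa using tendsto_const_nhds.sub h0
  have : y t = y t - 0 := by ring
  have heq : (fun a => ∫ s in a..t, Real.exp (-μ * (t - s)) * f s)
      = fun a => y t - Real.exp (-μ * (t - a)) * y a := funext key
  rw [heq] at hlim1
  exact tendsto_nhds_unique hlim2 hlim1

/-- Forward variation-of-constants representation: if `y' = -μy + f` with `μ > 0` and
`y`, `f` bounded (`f` continuous), then `y(t) = ∫_{-∞}^t e^{-μ(t-s)} f(s) ds`, and consequently
`y(t)² ≤ 2∫_{-∞}^t e^{-2μ(t-s)} y(s)f(s) ds` whenever the latter integral converges. -/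
theorem forward_representation_of_bounded_solution
    (μ : ℝ) (hμ : 0 < μ)
    (y f : ℝ → ℝ)
    (hy : ∀ t : ℝ, HasDerivAt y (-μ * y t + f t) t)
    (hfc : Continuous f)
    (hyb : ∃ B, ∀ t, |y t| ≤ B) (hfb : ∃ B, ∀ t, |f t| ≤ B) :
    (∀ t : ℝ, y t = ∫ s in Set.Iic t, Real.exp (-μ * (t - s)) * f s) ∧
    ∀ t : ℝ, IntegrableOn (fun s => Real.exp (-2 * μ * (t - s)) * (y s * f s)) (Set.Iic t) →
      (y t) ^ 2 ≤ 2 * ∫ s in Set.Iic t, Real.exp (-2 * μ * (t - s)) * (y s * f s) := by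
  obtain ⟨By, hBy⟩ := hyb
  obtain ⟨Bf, hBf⟩ := hfb
  have hycont : Continuous y := continuous_iff_continuousAt.mpr fun s => (hy s).continuousAt
  constructor
  · exact fun t => (rep_lemma μ hμ y f hy hfc ⟨By, hBy⟩ ⟨Bf, hBf⟩ t).2
  · intro t _
    have hy2 : ∀ s : ℝ, HasDerivAt (fun s => y s ^ 2)
        (-(2 * μ) * (y s ^ 2) + 2 * (y s * f s)) s := by
      intro s
      have := (hy s).fun_pow 2
      exact this.congr_deriv (by push_cast; ring)
    have hc2 : Continuous fun s => 2 * (y s * f s) :=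
      continuous_const.mul (hycont.mul hfc)
    have hb2 : ∃ B, ∀ s : ℝ, |y s ^ 2| ≤ B :=
      ⟨By ^ 2, fun s => by
        rw [abs_pow]; exact pow_le_pow_left₀ (abs_nonneg _) (hBy s) 2⟩
    have hb2' : ∃ B, ∀ s : ℝ, |2 * (y s * f s)| ≤ B := by
      refine ⟨2 * (By * Bf), fun s => ?_⟩
      have h1 := abs_nonneg (y s)
      have h2 := abs_nonneg (f s)
      have h3 := hBy s
      have h4 := hBf s
      rw [abs_mul, abs_mul, abs_two]
      nlinarith
    have h2 := (rep_lemma (2 * μ) (by linarith) (fun s => y s ^ 2)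
      (fun s => 2 * (y s * f s)) hy2 hc2 hb2 hb2' t).2
    rw [h2]
    apply le_of_eq
    have hrw : (fun s => Real.exp (-(2 * μ) * (t - s)) * (2 * (y s * f s)))
        = fun s => 2 * (Real.exp (-2 * μ * (t - s)) * (y s * f s)) := by
      ext s
      rw [show (-(2 * μ) : ℝ) = -2 * μ by ring]
      ring
    rw [hrw, integral_const_mul]
end

section
/- Let x : ℝ → ℝ^p and y : ℝ → ℝ^q be bounded continuous functions, and set u(t) = ‖x(t)‖² and v(t) = ‖y(t)‖². Suppose there are constants a, b > 0, λ₁, λ₂, λ₃, λ₄ ≥ 0 and M₁, M₂ ≥ 0 with λ₁ < a and λ₄ < b such that u(t) ≤ ∫_{-∞}^{t} e^{-a(t-s)}(λ₁ u(s) + λ₂ v(s)) ds + M₁ and v(t) ≤ ∫_{t}^{∞} e^{-b(s-t)}(λ₃ u(s) + λ₄ v(s)) ds + M₂ for all t ∈ ℝ. Then, setting a' = a - λ₁ and b' = b - λ₄, we have u(t) ≤ λ₂ ∫_{-∞}^{t} e^{-a'(t-s)} v(s) ds + M₁ a/a' and v(t) ≤ λ₃ ∫_{t}^{∞} e^{-b'(s-t)}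 u(s) ds + M₂ b/b' for all t ∈ ℝ. -/
open MeasureTheory

namespace GronwallAux

open Set Filter

lemma intInt_exp (c : ℝ) (hc : c ≠ 0) (r t : ℝ) :
    ∫ x in r..t, Real.exp (c * x) = (Real.exp (c * t) - Real.exp (c * r)) / c := by
  rw [intervalIntegral.integral_comp_mul_left Real.exp hc, integral_exp, smul_eq_mul]
  field_simp

lemma integrableOn_exp_mul (c : ℝ) (hc : 0 < c) (g : ℝ → ℝ) (hg : Continuous g) (B : ℝ)
    (hB : ∀ s, |g s| ≤ B) (t : ℝ) :
    IntegrableOn (fun s => Real.exp (c * s) * g s) (Iic t) := by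
  have hB0 : 0 ≤ B := (abs_nonneg _).trans (hB 0)
  have hcont : Continuous fun s => Real.exp (c * s) * g s :=
    (Real.continuous_exp.comp (continuous_const.mul continuous_id)).mul hg
  apply integrableOn_Iic_of_intervalIntegral_norm_bounded (B * Real.exp (c * t) / c) t
    (fun r => hcont.integrableOn_Ioc) tendsto_id
  filter_upwards [eventually_le_atBot t] with r hr
  have h1 : (∫ x in r..t, ‖Real.exp (c * x) * g x‖) ≤ ∫ x in r..t, B * Real.exp (c * x) := by
    apply intervalIntegral.integral_mono_on hr (hcont.norm.intervalIntegrable r t)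
      ((continuous_const.mul (Real.continuous_exp.comp
        (continuous_const.mul continuous_id))).intervalIntegrable r t)
    intro x _
    rw [norm_mul, Real.norm_eq_abs, Real.norm_eq_abs, abs_of_nonneg (Real.exp_nonneg _)]
    show _ ≤ B * Real.exp (c * x)
    rw [mul_comm B]
    exact mul_le_mul_of_nonneg_left (hB x) (Real.exp_nonneg _)
  rw [intervalIntegral.integral_const_mul, intInt_exp c hc.ne'] at h1
  have h2 : B * ((Real.exp (c * t) - Real.exp (c * r)) / c) ≤ B * Real.exp (c * t) / c := by
    rw [mul_div_assoc]
    gcongr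
    linarith [Real.exp_pos (c * r)]
  exact h1.trans h2


lemma integral_exp_mul_Iic (c : ℝ) (hc : 0 < c) (t : ℝ) :
    ∫ s in Iic t, Real.exp (c * s) = Real.exp (c * t) / c := by
  have hint : IntegrableOn (fun s => Real.exp (c * s)) (Iic t) := by
    have := integrableOn_exp_mul c hc (fun _ => 1) continuous_const 1 (by simp) t
    simpa using this
  refine tendsto_nhds_unique
    (intervalIntegral_tendsto_integral_Iic t hint (tendsto_id (x := atBot))) ?_
  have h1 : Tendsto (fun r : ℝ => (Real.exp (c * t) - Real.exp (c * r)) / c) atBot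
      (nhds ((Real.exp (c * t) - 0) / c)) := by
    apply Tendsto.div_const
    exact tendsto_const_nhds.sub
      (Real.tendsto_exp_atBot.comp (tendsto_id.const_mul_atBot hc))
  simp only [sub_zero] at h1
  refine h1.congr fun r => ?_
  rw [intInt_exp c hc.ne']
  simp only [id]

lemma kernel_eq (c t : ℝ) (g : ℝ → ℝ) :
    (fun s => Real.exp (-c * (t - s)) * g s)
      = fun s => Real.exp (-c * t) * (Real.exp (c * s) * g s) := by
  funext s
  rw [← mul_assoc, ← Real.exp_add]
  congr 2
  ring

lemma integrableOn_kernel (c : ℝ) (hc : 0 < c) (g : ℝ → ℝ) (hg : Continuous g) (B : ℝ)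
    (hB : ∀ s, |g s| ≤ B) (t : ℝ) :
    IntegrableOn (fun s => Real.exp (-c * (t - s)) * g s) (Iic t) := by
  rw [kernel_eq]
  exact (integrableOn_exp_mul c hc g hg B hB t).const_mul _

lemma integral_kernel (c : ℝ) (hc : 0 < c) (g : ℝ → ℝ) (t : ℝ) :
    ∫ s in Iic t, Real.exp (-c * (t - s)) * g s
      = Real.exp (-c * t) * ∫ s in Iic t, Real.exp (c * s) * g s := by
  rw [kernel_eq, integral_const_mul]

lemma integral_kernel_one (c : ℝ) (hc : 0 < c) (t : ℝ) :
    ∫ s in Iic t, Real.exp (-c * (t - s)) = 1 / c := by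
  have : (fun s : ℝ => Real.exp (-c * (t - s))) = fun s => Real.exp (-c * (t - s)) * 1 := by
    funext s; ring
  rw [this, integral_kernel c hc]
  simp only [mul_one]
  rw [integral_exp_mul_Iic c hc, ← mul_div_assoc, ← Real.exp_add]
  rw [show -c * t + c * t = 0 by ring, Real.exp_zero]

lemma integral_kernel_abs_le (c : ℝ) (hc : 0 < c) (g : ℝ → ℝ) (hg : Continuous g) (B : ℝ)
    (hB : ∀ s, |g s| ≤ B) (t : ℝ) :
    |∫ s in Iic t, Real.exp (-c * (t - s)) * g s| ≤ B / c := by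
  have hB0 : 0 ≤ B := (abs_nonneg _).trans (hB 0)
  have h1 : |∫ s in Iic t, Real.exp (-c * (t - s)) * g s|
      ≤ ∫ s in Iic t, |Real.exp (-c * (t - s)) * g s| := by
    have := norm_integral_le_integral_norm (μ := volume.restrict (Iic t))
        (fun s => Real.exp (-c * (t - s)) * g s)
    simpa only [Real.norm_eq_abs] using this
  have h2 : (∫ s in Iic t, |Real.exp (-c * (t - s)) * g s|)
      ≤ ∫ s in Iic t, Real.exp (-c * (t - s)) * B := by
    apply setIntegral_mono_on ((integrableOn_kernel c hc g hg B hB t).abs)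
      ((integrableOn_kernel c hc (fun _ => B) continuous_const B
        (fun _ => (abs_of_nonneg hB0).le) t))
      measurableSet_Iic
    intro s _
    rw [abs_mul, abs_of_nonneg (Real.exp_nonneg _)]
    exact mul_le_mul_of_nonneg_left (hB s) (Real.exp_nonneg _)
  have h3 : (∫ s in Iic t, Real.exp (-c * (t - s)) * B) = B / c := by
    rw [integral_mul_const, integral_kernel_one c hc]
    ring
  linarith


lemma hasDerivAt_kernel (c : ℝ) (hc : 0 < c) (g : ℝ → ℝ) (hg : Continuous g) (B : ℝ)
    (hB : ∀ s, |g s| ≤ B) (t : ℝ) :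
    HasDerivAt (fun r => ∫ s in Iic r, Real.exp (-c * (r - s)) * g s)
      (g t - c * ∫ s in Iic t, Real.exp (-c * (t - s)) * g s) t := by
  set f : ℝ → ℝ := fun s => Real.exp (c * s) * g s with hf
  have hfc : Continuous f :=
    (Real.continuous_exp.comp (continuous_const.mul continuous_id)).mul hg
  have hint : ∀ r, IntegrableOn f (Iic r) := integrableOn_exp_mul c hc g hg B hB
  set G : ℝ → ℝ := fun r => ∫ s in Iic r, f s with hG
  have hGdecomp : G = fun r => G t + ∫ s in t..r, f s := by
    funext r
    rw [← intervalIntegral.integral_Iic_sub_Iic (hint t) (hint r)]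
    ring
  have hGd : HasDerivAt G (f t) t := by
    rw [hGdecomp]
    exact ((intervalIntegral.integral_hasDerivAt_right ((hfc.intervalIntegrable t t))
      (hfc.stronglyMeasurableAtFilter _ _) hfc.continuousAt)).const_add (G t)
  have hexp : HasDerivAt (fun r => Real.exp (-c * r)) (-c * Real.exp (-c * t)) t := by
    have h := ((hasDerivAt_id t).const_mul (-c)).exp
    simpa [mul_comm] using h
  have hrw : (fun r => ∫ s in Iic r, Real.exp (-c * (r - s)) * g s)
      = fun r => Real.exp (-c * r) * G r := by
    funext r
    exact integral_kernel c hc g r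
  rw [hrw]
  have := hexp.mul hGd
  refine this.congr_deriv ?_
  rw [show (∫ s in Iic t, Real.exp (-c * (t - s)) * g s) = Real.exp (-c * t) * G t from
    integral_kernel c hc g t]
  have h1 : Real.exp (-c * t) * f t = g t := by
    rw [hf, ← mul_assoc, ← Real.exp_add, show -c * t + c * t = 0 by ring, Real.exp_zero, one_mul]
  rw [← h1]
  ring


lemma key (a l₁ l₂ M : ℝ) (ha : 0 < a) (hl₁ : 0 ≤ l₁) (hl₁a : l₁ < a) (hl₂ : 0 ≤ l₂)
    (hM : 0 ≤ M) (w z : ℝ → ℝ) (hwc : Continuous w) (hzc : Continuous z)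
    (Bw : ℝ) (hw0 : ∀ t, 0 ≤ w t) (hwB : ∀ t, w t ≤ Bw)
    (Bz : ℝ) (hz0 : ∀ t, 0 ≤ z t) (hzB : ∀ t, z t ≤ Bz)
    (hineq : ∀ t, w t ≤ (∫ s in Iic t, Real.exp (-a * (t - s)) * (l₁ * w s + l₂ * z s)) + M) :
    ∀ t, w t ≤ l₂ * (∫ s in Iic t, Real.exp (-(a - l₁) * (t - s)) * z s) + M * a / (a - l₁) := by
  set a' : ℝ := a - l₁ with ha'def
  have ha' : 0 < a' := by simp only [ha'def]; linarith
  have hzabs : ∀ s, |z s| ≤ Bz := fun s => abs_le.2 ⟨by linarith [hz0 s, hzB s], hzB s⟩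
  have hwabs : ∀ s, |w s| ≤ Bw := fun s => abs_le.2 ⟨by linarith [hw0 s, hwB s], hwB s⟩
  have hBz0 : 0 ≤ Bz := le_trans (hz0 0) (hzB 0)
  -- the three auxiliary functions
  set ψ : ℝ → ℝ := fun t => ∫ s in Iic t, Real.exp (-a' * (t - s)) * z s with hψdef
  set K : ℝ → ℝ := fun t => ∫ s in Iic t, Real.exp (-a * (t - s)) * z s with hKdef
  have hψd : ∀ t, HasDerivAt ψ (z t - a' * ψ t) t := fun t =>
    hasDerivAt_kernel a' ha' z hzc Bz hzabs t
  have hKd : ∀ t, HasDerivAt K (z t - a * K t) t := fun t =>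
    hasDerivAt_kernel a ha z hzc Bz hzabs t
  have hψc : Continuous ψ := continuous_iff_continuousAt.2 fun t => (hψd t).continuousAt
  have hψabs : ∀ t, |ψ t| ≤ Bz / a' := fun t =>
    integral_kernel_abs_le a' ha' z hzc Bz hzabs t
  set Φ : ℝ → ℝ := fun t => ∫ s in Iic t, Real.exp (-a * (t - s)) * ψ s with hΦdef
  have hΦd : ∀ t, HasDerivAt Φ (ψ t - a * Φ t) t := fun t =>
    hasDerivAt_kernel a ha ψ hψc (Bz / a') hψabs t
  have hΦabs : ∀ t, |Φ t| ≤ (Bz / a') / a := fun t =>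
    integral_kernel_abs_le a ha ψ hψc (Bz / a') hψabs t
  have hKabs : ∀ t, |K t| ≤ Bz / a := fun t =>
    integral_kernel_abs_le a ha z hzc Bz hzabs t
  -- the identity ψ = l₁ Φ + K
  set D : ℝ → ℝ := fun t => ψ t - l₁ * Φ t - K t with hDdef
  have hDd : ∀ t, HasDerivAt D (-a * D t) t := by
    intro t
    have := ((hψd t).sub ((hΦd t).const_mul l₁)).sub (hKd t)
    refine this.congr_deriv ?_
    simp only [hDdef, ha'def]
    ring
  set E : ℝ → ℝ := fun t => Real.exp (a * t) * D t with hEdef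
  have hEd : ∀ t, HasDerivAt E 0 t := by
    intro t
    have hexp : HasDerivAt (fun r => Real.exp (a * r)) (a * Real.exp (a * t)) t := by
      have h := ((hasDerivAt_id t).const_mul a).exp
      simpa [mul_comm] using h
    have := hexp.mul (hDd t)
    refine this.congr_deriv ?_
    ring
  have hEconst : ∀ t, E t = E 0 := by
    intro t
    exact is_const_of_deriv_eq_zero (fun s => (hEd s).differentiableAt)
      (fun s => (hEd s).deriv) t 0
  set C : ℝ := Bz / a' + l₁ * ((Bz / a') / a) + Bz / a with hCdef
  have hDabs : ∀ t, |D t| ≤ C := by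
    intro t
    simp only [hDdef, hCdef]
    have h1 := hψabs t; have h2 := hΦabs t; have h3 := hKabs t
    calc |ψ t - l₁ * Φ t - K t| ≤ |ψ t - l₁ * Φ t| + |K t| := abs_sub _ _
      _ ≤ |ψ t| + |l₁ * Φ t| + |K t| := by gcongr; exact abs_sub _ _
      _ ≤ Bz / a' + l₁ * ((Bz / a') / a) + Bz / a := by
          rw [abs_mul, abs_of_nonneg hl₁]
          have h4 : l₁ * |Φ t| ≤ l₁ * ((Bz / a') / a) := mul_le_mul_of_nonneg_left h2 hl₁
          linarith
  have hE0 : E 0 = 0 := by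
    have hle : ∀ t, |E 0| ≤ Real.exp (a * t) * C := by
      intro t
      rw [← hEconst t]
      simp only [hEdef]
      rw [abs_mul, abs_of_nonneg (Real.exp_nonneg _)]
      exact mul_le_mul_of_nonneg_left (hDabs t) (Real.exp_nonneg _)
    have htend : Tendsto (fun t => Real.exp (a * t) * C) atBot (nhds 0) := by
      have := (Real.tendsto_exp_atBot.comp (tendsto_id.const_mul_atBot ha)).mul_const C
      simpa using this
    have : |E 0| ≤ 0 := ge_of_tendsto htend (Eventually.of_forall hle)
    exact abs_nonpos_iff.mp this
  have hid : ∀ t, ψ t = l₁ * Φ t + K t := by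
    intro t
    have hEt : E t = 0 := by rw [hEconst t, hE0]
    have hDt : D t = 0 := by
      simp only [hEdef] at hEt
      rcases mul_eq_zero.mp hEt with hcase | hcase
      · exact absurd hcase (Real.exp_ne_zero _)
      · exact hcase
    simp only [hDdef] at hDt
    linarith
  -- the comparison function
  set h : ℝ → ℝ := fun t => l₂ * ψ t + M * a / a' with hhdef
  have hMa' : 0 ≤ M * a / a' := by positivity
  have hh_abs : ∀ t, |h t| ≤ l₂ * (Bz / a') + M * a / a' := by
    intro t
    simp only [hhdef]
    calc |l₂ * ψ t + M * a / a'| ≤ |l₂ * ψ t| + |M * a / a'| := abs_add_le _ _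
      _ ≤ l₂ * (Bz / a') + M * a / a' := by
          rw [abs_mul, abs_of_nonneg hl₂, abs_of_nonneg hMa']
          have := mul_le_mul_of_nonneg_left (hψabs t) hl₂
          linarith
  have hhc : Continuous h := (continuous_const.mul hψc).add continuous_const
  set d : ℝ → ℝ := fun t => w t - h t with hddef
  have hdc : Continuous d := hwc.sub hhc
  set Bd : ℝ := Bw + (l₂ * (Bz / a') + M * a / a') with hBddef
  have hdabs : ∀ t, |d t| ≤ Bd := by
    intro t
    simp only [hddef, hBddef]
    calc |w t - h t| ≤ |w t| + |h t| := abs_sub _ _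
      _ ≤ _ := add_le_add (hwabs t) (hh_abs t)
  set ρ : ℝ := sSup (Set.range d) with hρdef
  have hbdd : BddAbove (Set.range d) := by
    refine ⟨Bd, ?_⟩
    rintro _ ⟨t, rfl⟩
    exact (le_abs_self _).trans (hdabs t)
  have hρ : ∀ t, d t ≤ ρ := fun t => le_csSup hbdd ⟨t, rfl⟩
  set ρ' : ℝ := max ρ 0 with hρ'def
  have hexpint : ∀ t : ℝ, IntegrableOn (fun s => Real.exp (-a * (t - s))) (Iic t) := by
    intro t
    have := integrableOn_kernel a ha (fun _ => 1) continuous_const 1 (by simp) t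
    simpa using this
  have hmain : ∀ t, d t ≤ l₁ / a * ρ' := by
    intro t
    have hintw := integrableOn_kernel a ha w hwc Bw hwabs t
    have hintz := integrableOn_kernel a ha z hzc Bz hzabs t
    have hintψ := integrableOn_kernel a ha ψ hψc (Bz / a') hψabs t
    have hintd := integrableOn_kernel a ha d hdc Bd hdabs t
    have hinth := integrableOn_kernel a ha h hhc (l₂ * (Bz / a') + M * a / a') hh_abs t
    have e1 : (∫ s in Iic t, Real.exp (-a * (t - s)) * (l₁ * w s + l₂ * z s))
        = l₁ * (∫ s in Iic t, Real.exp (-a * (t - s)) * w s)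
          + l₂ * (∫ s in Iic t, Real.exp (-a * (t - s)) * z s) := by
      rw [setIntegral_congr_fun measurableSet_Iic
        (fun s _ => by ring :
          EqOn (fun s => Real.exp (-a * (t - s)) * (l₁ * w s + l₂ * z s))
            (fun s => l₁ * (Real.exp (-a * (t - s)) * w s)
              + l₂ * (Real.exp (-a * (t - s)) * z s)) (Iic t)),
        integral_add (hintw.const_mul l₁) (hintz.const_mul l₂),
        integral_const_mul, integral_const_mul]
    have e2 : (∫ s in Iic t, Real.exp (-a * (t - s)) * w s)
        = (∫ s in Iic t, Real.exp (-a * (t - s)) * d s)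
          + ∫ s in Iic t, Real.exp (-a * (t - s)) * h s := by
      rw [← integral_add hintd hinth]
      apply setIntegral_congr_fun measurableSet_Iic
      intro s _
      simp only [hddef]
      ring
    have e3 : (∫ s in Iic t, Real.exp (-a * (t - s)) * h s)
        = l₂ * Φ t + M * a / a' * (1 / a) := by
      rw [setIntegral_congr_fun measurableSet_Iic
        (fun s _ => by simp only [hhdef]; ring :
          EqOn (fun s => Real.exp (-a * (t - s)) * h s)
            (fun s => l₂ * (Real.exp (-a * (t - s)) * ψ s)
              + M * a / a' * Real.exp (-a * (t - s))) (Iic t)),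
        integral_add (hintψ.const_mul l₂) ((hexpint t).const_mul _),
        integral_const_mul, integral_const_mul, integral_kernel_one a ha]
    have eAll : (∫ s in Iic t, Real.exp (-a * (t - s)) * (l₁ * w s + l₂ * z s))
        = l₁ * (∫ s in Iic t, Real.exp (-a * (t - s)) * d s)
          + l₂ * ψ t + (M * a / a' - M) := by
      rw [e1, e2, e3, hid t]
      simp only [hKdef]
      have ha0 : a ≠ 0 := ha.ne'
      have ha'0 : a' ≠ 0 := ha'.ne'
      field_simp
      ring
    have hJd : (∫ s in Iic t, Real.exp (-a * (t - s)) * d s) ≤ ρ' * (1 / a) := by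
      calc (∫ s in Iic t, Real.exp (-a * (t - s)) * d s)
          ≤ ∫ s in Iic t, Real.exp (-a * (t - s)) * ρ' := by
            apply setIntegral_mono_on hintd ((hexpint t).mul_const ρ') measurableSet_Iic
            intro s _
            exact mul_le_mul_of_nonneg_left ((hρ s).trans (le_max_left _ _))
              (Real.exp_nonneg _)
        _ = ρ' * (1 / a) := by rw [integral_mul_const, integral_kernel_one a ha]; ring
    have h1 := hineq t
    rw [eAll] at h1
    have h2 : l₁ * (∫ s in Iic t, Real.exp (-a * (t - s)) * d s) ≤ l₁ * (ρ' * (1 / a)) :=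
      mul_le_mul_of_nonneg_left hJd hl₁
    have h3 : l₁ * (ρ' * (1 / a)) = l₁ / a * ρ' := by ring
    simp only [hddef, hhdef]
    linarith
  have hρle : ρ ≤ l₁ / a * ρ' :=
    csSup_le (Set.range_nonempty d) (by rintro _ ⟨t, rfl⟩; exact hmain t)
  have hρ0 : ρ ≤ 0 := by
    by_contra hpos
    push_neg at hpos
    have hmaxeq : ρ' = ρ := max_eq_left hpos.le
    rw [hmaxeq] at hρle
    have hlt : l₁ / a < 1 := (div_lt_one ha).2 hl₁a
    nlinarith
  intro t
  have hdt : d t ≤ 0 := (hρ t).trans hρ0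
  simp only [hddef, hhdef, hψdef] at hdt
  linarith

end GronwallAux

/-- Decoupling step of the forward-backward Gronwall coupling: from
`u(t) ≤ ∫_{-∞}^t e^{-a(t-s)}(λ₁u + λ₂v) ds + M₁` and
`v(t) ≤ ∫_t^∞ e^{-b(s-t)}(λ₃u + λ₄v) ds + M₂` with `λ₁ < a`, `λ₄ < b`, one gets
`u(t) ≤ λ₂ ∫_{-∞}^t e^{-(a-λ₁)(t-s)} v ds + M₁a/(a-λ₁)` and
`v(t) ≤ λ₃ ∫_t^∞ e^{-(b-λ₄)(s-t)} u ds + M₂b/(b-λ₄)`. -/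
theorem forward_backward_gronwall_decoupling
    {p q : ℕ} (x : ℝ → (Fin p → ℝ)) (y : ℝ → (Fin q → ℝ))
    (hxc : Continuous x) (hyc : Continuous y)
    (hxb : ∃ B, ∀ t, ‖x t‖ ≤ B) (hyb : ∃ B, ∀ t, ‖y t‖ ≤ B)
    (u v : ℝ → ℝ) (hu : ∀ t, u t = ‖x t‖ ^ 2) (hv : ∀ t, v t = ‖y t‖ ^ 2)
    (a b l₁ l₂ l₃ l₄ M₁ M₂ : ℝ) (ha : 0 < a) (hb : 0 < b)
    (hl₁ : 0 ≤ l₁) (hl₂ : 0 ≤ l₂) (hl₃ : 0 ≤ l₃) (hl₄ : 0 ≤ l₄)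
    (hM₁ : 0 ≤ M₁) (hM₂ : 0 ≤ M₂) (hl₁a : l₁ < a) (hl₄b : l₄ < b)
    (hu_ineq : ∀ t : ℝ,
      u t ≤ (∫ s in Set.Iic t, Real.exp (-a * (t - s)) * (l₁ * u s + l₂ * v s)) + M₁)
    (hv_ineq : ∀ t : ℝ,
      v t ≤ (∫ s in Set.Ici t, Real.exp (-b * (s - t)) * (l₃ * u s + l₄ * v s)) + M₂) :
    (∀ t : ℝ, u t ≤
      l₂ * (∫ s in Set.Iic t, Real.exp (-(a - l₁) * (t - s)) * v s) + M₁ * a / (a - l₁)) ∧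
    (∀ t : ℝ, v t ≤
      l₃ * (∫ s in Set.Ici t, Real.exp (-(b - l₄) * (s - t)) * u s) + M₂ * b / (b - l₄)) := by
  obtain ⟨Bx, hBx⟩ := hxb
  obtain ⟨By, hBy⟩ := hyb
  have huc : Continuous u := by
    have hh : u = fun t => ‖x t‖ ^ 2 := funext hu
    rw [hh]; exact hxc.norm.pow 2
  have hvc : Continuous v := by
    have hh : v = fun t => ‖y t‖ ^ 2 := funext hv
    rw [hh]; exact hyc.norm.pow 2
  have hu0 : ∀ t, 0 ≤ u t := fun t => by rw [hu t]; positivity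
  have hv0 : ∀ t, 0 ≤ v t := fun t => by rw [hv t]; positivity
  have huB : ∀ t, u t ≤ Bx ^ 2 := fun t => by
    rw [hu t]; exact pow_le_pow_left₀ (norm_nonneg _) (hBx t) 2
  have hvB : ∀ t, v t ≤ By ^ 2 := fun t => by
    rw [hv t]; exact pow_le_pow_left₀ (norm_nonneg _) (hBy t) 2
  constructor
  · exact GronwallAux.key a l₁ l₂ M₁ ha hl₁ hl₁a hl₂ hM₁ u v huc hvc
      (Bx ^ 2) hu0 huB (By ^ 2) hv0 hvB hu_ineq
  · have hwc : Continuous fun t => v (-t) := hvc.comp continuous_neg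
    have hzc : Continuous fun t => u (-t) := huc.comp continuous_neg
    have hineq' : ∀ t, v (-t) ≤
        (∫ s in Set.Iic t, Real.exp (-b * (t - s)) * (l₄ * v (-s) + l₃ * u (-s))) + M₂ := by
      intro t
      have h0 := hv_ineq (-t)
      have heq : (∫ s in Set.Iic t, Real.exp (-b * (t - s)) * (l₄ * v (-s) + l₃ * u (-s)))
          = ∫ s in Set.Ici (-t), Real.exp (-b * (s - -t)) * (l₃ * u s + l₄ * v s) := by
        calc (∫ s in Set.Iic t, Real.exp (-b * (t - s)) * (l₄ * v (-s) + l₃ * u (-s)))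
            = ∫ s in Set.Iic t,
              (fun r => Real.exp (-b * (r - -t)) * (l₃ * u r + l₄ * v r)) (-s) := by
              apply MeasureTheory.setIntegral_congr_fun measurableSet_Iic
              intro s _
              simp only
              rw [show -b * (-s - -t) = -b * (t - s) by ring]
              ring
          _ = ∫ s in Set.Ioi (-t), Real.exp (-b * (s - -t)) * (l₃ * u s + l₄ * v s) := by
              exact integral_comp_neg_Iic t
                (fun r => Real.exp (-b * (r - -t)) * (l₃ * u r + l₄ * v r))
          _ = ∫ s in Set.Ici (-t), Real.exp (-b * (s - -t)) * (l₃ * u s + l₄ * v s) :=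
              (MeasureTheory.integral_Ici_eq_integral_Ioi).symm
      rw [heq]
      exact h0
    have hkey := GronwallAux.key b l₄ l₃ M₂ hb hl₄ hl₄b hl₃ hM₂
      (fun t => v (-t)) (fun t => u (-t)) hwc hzc
      (By ^ 2) (fun t => hv0 (-t)) (fun t => hvB (-t))
      (Bx ^ 2) (fun t => hu0 (-t)) (fun t => huB (-t)) hineq'
    intro t
    have h1 := hkey (-t)
    simp only [neg_neg] at h1
    have heq2 : (∫ s in Set.Iic (-t), Real.exp (-(b - l₄) * (-t - s)) * u (-s))
        = ∫ s in Set.Ici t, Real.exp (-(b - l₄) * (s - t)) * u s := by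
      calc (∫ s in Set.Iic (-t), Real.exp (-(b - l₄) * (-t - s)) * u (-s))
          = ∫ s in Set.Iic (-t),
            (fun r => Real.exp (-(b - l₄) * (r - t)) * u r) (-s) := by
            apply MeasureTheory.setIntegral_congr_fun measurableSet_Iic
            intro s _
            simp only
            rw [show -(b - l₄) * (-s - t) = -(b - l₄) * (-t - s) by ring]
        _ = ∫ s in Set.Ioi (-(-t)), Real.exp (-(b - l₄) * (s - t)) * u s := by
            exact integral_comp_neg_Iic (-t)
              (fun r => Real.exp (-(b - l₄) * (r - t)) * u r)
        _ = ∫ s in Set.Ici t, Real.exp (-(b - l₄) * (s - t)) * u s := by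
            rw [neg_neg, ← MeasureTheory.integral_Ici_eq_integral_Ioi]
    rw [heq2] at h1
    exact h1
end
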